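/- arXiv:1407.7873 — 8 statements merged into one kernel-verified Lean document; each statement's English description precedes it below -/
import Mathlib

section
/- Let G be a graph with positive edge weights w_e, and define the weighted matching polynomial M((G,w); t) = Σ_{S matching} (Π_{e∈S} w_e) (-1)^{|S|} t^{n-2|S|}. If G is a tree and G₁ is a subgraph of G (with the induced edge weights), then the largest real root of M((G₁,w); t) is at most the largest real root of M((G,w); t). -/
open Finset
open scoped Classical

/-- A matching of a simple graph: a finite set of edges, pairwise vertex-disjoint. -/
def IsMatchingSet {V : Type*} [DecidableEq V] (G : SimpleGraph V) (M : Finset (Sym2 V)) : Prop :=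
  (∀ e ∈ M, e ∈ G.edgeSet) ∧
    ∀ e ∈ M, ∀ f ∈ M, e ≠ f → ∀ v, v ∈ e → v ∉ f

/-- The finite set of all matchings of `G` (including the empty matching). -/
noncomputable def matchings {V : Type*} [Fintype V] [DecidableEq V] (G : SimpleGraph V) :
    Finset (Finset (Sym2 V)) :=
  Finset.univ.filter fun M => IsMatchingSet G M

/-- The weighted matching polynomial
`M((G,w);t) = Σ_{S matching} (Π_{e∈S} w_e) (-1)^{|S|} t^{n-2|S|}`. -/
noncomputable def wmp {V : Type*} [Fintype V] [DecidableEq V] (G : SimpleGraph V)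
    (w : Sym2 V → ℝ) (t : ℝ) : ℝ :=
  ∑ M ∈ matchings G, (∏ e ∈ M, w e) * (-1 : ℝ) ^ M.card * t ^ (Fintype.card V - 2 * M.card)

/-!
For a forest, the weighted matching polynomial is the characteristic polynomial of the adjacency
matrix `A` with entries `√w`: a permutation contributing to `det (t - A)` moves every vertex along
an edge, in an acyclic graph such a permutation is an involution, i.e. the permutation of a
matching, and its sign is `(-1)` to the number of matched edges. So the largest root is the largest
eigenvalue `λ` of `A`. If `A₁ x = t₁ x` with `x ≠ 0`, then `0 ≤ A₁ ≤ A` entrywise gives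
`t₁ ‖x‖² = xᵀ A₁ x ≤ |x|ᵀ A |x| ≤ λ ‖x‖²`.
-/

open Equiv SimpleGraph

namespace SimpleGraph

variable {V : Type*} {H : SimpleGraph V} {w : Sym2 V → ℝ}

def MovesAlongEdges (H : SimpleGraph V) (σ : Perm V) : Prop :=
  ∀ v, σ v ≠ v → H.Adj v (σ v)

theorem MovesAlongEdges.apply_apply_of_isAcyclic [Finite V] {σ : Perm V}
    (hσ : H.MovesAlongEdges σ) (hH : H.IsAcyclic) (v : V) : σ (σ v) = v := by
  by_contra h2
  have hv : σ v ≠ v := fun h => h2 (by rw [h, h])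
  -- The orbit of `σ v` leads back to `v` even without the edge `s(v, σ v)`: it is no bridge.
  have hreach : ∀ k, (H.deleteEdges {s(v, σ v)}).Reachable (σ v) ((σ ^ (k + 1)) v) := by
    intro k
    induction k with
    | zero => simp
    | succ k ih =>
      set u := (σ ^ (k + 1)) v
      rw [pow_succ', Perm.mul_apply]
      by_cases he : s(u, σ u) = s(v, σ v)
      · rcases Sym2.eq_iff.mp he with ⟨-, hu⟩ | ⟨hu, hσu⟩
        · rw [hu]
        · exact absurd (hu ▸ hσu) h2
      · have hu : σ u ≠ u := fun h => hv <| (σ ^ (k + 1)).injective <| by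
          rw [← Perm.mul_apply, ← pow_succ, pow_succ', Perm.mul_apply]
          exact h
        exact ih.trans (Adj.reachable (deleteEdges_adj.mpr ⟨hσ u hu, he⟩))
  have hback := hreach (orderOf σ - 1)
  rw [Nat.sub_add_cancel (orderOf_pos σ), pow_orderOf_eq_one, Perm.one_apply] at hback
  exact isAcyclic_iff_forall_adj_isBridge.mp hH (hσ v hv) hback.symm

/-- Entries are `√w` so that a transposition along an edge `e` contributes `w e` to the
determinant. -/
noncomputable def sqrtWeightAdjMatrix (H : SimpleGraph V) (w : Sym2 V → ℝ) : Matrix V V ℝ :=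
  Matrix.of fun i j => if H.Adj i j then √(w s(i, j)) else 0

theorem isHermitian_sqrtWeightAdjMatrix : (H.sqrtWeightAdjMatrix w).IsHermitian := by
  ext i j
  simp [sqrtWeightAdjMatrix, H.adj_comm, Sym2.eq_swap]

theorem sqrtWeightAdjMatrix_nonneg (i j : V) : 0 ≤ H.sqrtWeightAdjMatrix w i j := by
  simp only [sqrtWeightAdjMatrix, Matrix.of_apply]
  split_ifs <;> simp

theorem sqrtWeightAdjMatrix_mono {H₁ : SimpleGraph V} (h : H₁ ≤ H) (i j : V) :
    H₁.sqrtWeightAdjMatrix w i j ≤ H.sqrtWeightAdjMatrix w i j := by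
  by_cases hij : H₁.Adj i j
  · simp [sqrtWeightAdjMatrix, hij, h hij]
  · simpa [sqrtWeightAdjMatrix, hij] using H.sqrtWeightAdjMatrix_nonneg (w := w) i j

variable [DecidableEq V]

theorem smul_one_sub_sqrtWeightAdjMatrix_apply (t : ℝ) (i j : V) :
    (t • 1 - H.sqrtWeightAdjMatrix w) i j =
      if i = j then t else if H.Adj i j then -√(w s(i, j)) else 0 := by
  by_cases h : i = j
  · simp [sqrtWeightAdjMatrix, h]
  · simp only [sqrtWeightAdjMatrix, Matrix.sub_apply, Matrix.smul_apply, Matrix.one_apply_ne h,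
      Matrix.of_apply, h, if_false, smul_zero, zero_sub]
    split_ifs <;> simp

noncomputable def partner (M : Finset (Sym2 V)) (v : V) : V :=
  if h : ∃ e ∈ M, v ∈ e then Sym2.Mem.other h.choose_spec.2 else v

theorem partner_eq_self {M : Finset (Sym2 V)} {v : V} (h : ∀ e ∈ M, v ∉ e) : partner M v = v :=
  dif_neg fun ⟨e, he, hv⟩ => h e he hv

namespace IsMatchingSet

variable {M : Finset (Sym2 V)}

theorem partner_eq (hM : IsMatchingSet H M) {u v : V} (h : s(v, u) ∈ M) : partner M v = u := by
  have hex : ∃ e ∈ M, v ∈ e := ⟨_, h, Sym2.mem_mk_left v u⟩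
  have hchoose : hex.choose = s(v, u) := by
    by_contra hne
    exact hM.2 _ hex.choose_spec.1 _ h hne v hex.choose_spec.2 (Sym2.mem_mk_left v u)
  rw [partner, dif_pos hex]
  exact Sym2.congr_right.mp ((Sym2.other_spec hex.choose_spec.2).trans hchoose)

theorem mk_partner_eq (hM : IsMatchingSet H M) {e : Sym2 V} {v : V} (he : e ∈ M) (hv : v ∈ e) :
    s(v, partner M v) = e := by
  rw [hM.partner_eq (Sym2.other_spec hv ▸ he), Sym2.other_spec hv]

theorem mk_partner_mem (hM : IsMatchingSet H M) {v : V} (h : partner M v ≠ v) :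
    s(v, partner M v) ∈ M := by
  by_cases hv : ∃ e ∈ M, v ∈ e
  · obtain ⟨e, he, hve⟩ := hv
    exact hM.mk_partner_eq he hve ▸ he
  · exact absurd (partner_eq_self fun e he hve => hv ⟨e, he, hve⟩) h

theorem partner_partner (hM : IsMatchingSet H M) (v : V) : partner M (partner M v) = v := by
  by_cases h : partner M v = v
  · rw [h, h]
  · exact hM.partner_eq (Sym2.eq_swap ▸ hM.mk_partner_mem h)

noncomputable def perm (hM : IsMatchingSet H M) : Perm V :=
  Function.Involutive.toPerm _ hM.partner_partner

theorem perm_apply (hM : IsMatchingSet H M) (v : V) : hM.perm v = partner M v := rfl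

theorem movesAlongEdges_perm (hM : IsMatchingSet H M) : H.MovesAlongEdges hM.perm :=
  fun _ h => H.mem_edgeSet.mp (hM.1 _ (hM.mk_partner_mem h))

end IsMatchingSet

variable [Fintype V]

theorem mem_matchings {M : Finset (Sym2 V)} : M ∈ matchings H ↔ IsMatchingSet H M := by
  simp [matchings]

def edgesOfPerm (σ : Perm V) : Finset (Sym2 V) :=
  σ.support.image fun v => s(v, σ v)

theorem mem_edgesOfPerm {σ : Perm V} {e : Sym2 V} :
    e ∈ edgesOfPerm σ ↔ ∃ v, σ v ≠ v ∧ s(v, σ v) = e := by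
  simp [edgesOfPerm]

theorem IsMatchingSet.edgesOfPerm_perm {M : Finset (Sym2 V)} (hM : IsMatchingSet H M) :
    edgesOfPerm hM.perm = M := by
  ext e
  refine ⟨fun he => ?_, fun he => ?_⟩
  · obtain ⟨v, hv, rfl⟩ := mem_edgesOfPerm.mp he
    exact hM.mk_partner_mem hv
  · induction e using Sym2.ind with
    | _ a b =>
      have hb : hM.perm a = b := hM.partner_eq he
      exact mem_edgesOfPerm.mpr ⟨a, hb ▸ (H.mem_edgeSet.mp (hM.1 _ he)).ne.symm, by rw [hb]⟩

variable {σ : Perm V}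

theorem MovesAlongEdges.isMatchingSet_edgesOfPerm (hσ : H.MovesAlongEdges σ)
    (hinv : ∀ v, σ (σ v) = v) : IsMatchingSet H (edgesOfPerm σ) := by
  constructor
  · intro e he
    obtain ⟨v, hv, rfl⟩ := mem_edgesOfPerm.mp he
    exact hσ v hv
  · intro e he f hf hef v hve hvf
    obtain ⟨i, -, rfl⟩ := mem_edgesOfPerm.mp he
    obtain ⟨j, -, rfl⟩ := mem_edgesOfPerm.mp hf
    apply hef
    rcases Sym2.mem_iff.mp hve with rfl | rfl <;> rcases Sym2.mem_iff.mp hvf with h | h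
    · rw [h]
    · rw [h, hinv, Sym2.eq_swap]
    · rw [← h, hinv, Sym2.eq_swap]
    · rw [σ.injective h]

theorem MovesAlongEdges.perm_isMatchingSet_edgesOfPerm (hσ : H.MovesAlongEdges σ)
    (hinv : ∀ v, σ (σ v) = v) : (hσ.isMatchingSet_edgesOfPerm hinv).perm = σ := by
  have hM := hσ.isMatchingSet_edgesOfPerm hinv
  ext v
  rw [IsMatchingSet.perm_apply]
  by_cases hv : σ v = v
  · rw [hv]
    refine partner_eq_self fun e he hve => ?_
    obtain ⟨u, hu, rfl⟩ := mem_edgesOfPerm.mp he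
    rcases Sym2.mem_iff.mp hve with rfl | rfl
    · exact hu hv
    · exact hu (hv.symm.trans (hinv u))
  · exact hM.partner_eq (mem_edgesOfPerm.mpr ⟨v, hv, rfl⟩)

theorem card_filter_support_eq_two (hinv : ∀ v, σ (σ v) = v) {v : V} (hv : σ v ≠ v) :
    #{u ∈ σ.support | s(u, σ u) = s(v, σ v)} = 2 := by
  have hpair : {u ∈ σ.support | s(u, σ u) = s(v, σ v)} = {v, σ v} := by
    ext u
    simp only [mem_filter, Perm.mem_support, mem_insert, mem_singleton]
    constructor
    · rintro ⟨-, hu⟩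
      rcases Sym2.eq_iff.mp hu with ⟨h, -⟩ | ⟨h, -⟩ <;> simp [h]
    · rintro (rfl | rfl)
      · exact ⟨hv, rfl⟩
      · exact ⟨fun h => hv (h.symm.trans (hinv v)), by rw [hinv, Sym2.eq_swap]⟩
  rw [hpair, card_pair hv.symm]

theorem prod_support_eq_prod_edgesOfPerm_sq {M : Type*} [CommMonoid M] (hinv : ∀ v, σ (σ v) = v)
    (f : Sym2 V → M) : ∏ v ∈ σ.support, f s(v, σ v) = ∏ e ∈ edgesOfPerm σ, f e ^ 2 := by
  rw [← prod_fiberwise_of_maps_to (g := fun v => s(v, σ v))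
    fun v hv => mem_image_of_mem (fun v => s(v, σ v)) hv]
  refine prod_congr rfl fun e he => ?_
  obtain ⟨v, hv, rfl⟩ := mem_edgesOfPerm.mp he
  rw [prod_congr rfl fun u hu => congrArg f (mem_filter.mp hu).2, prod_const,
    card_filter_support_eq_two hinv hv]

theorem card_support_eq_two_mul_card_edgesOfPerm (hinv : ∀ v, σ (σ v) = v) :
    #σ.support = 2 * #(edgesOfPerm σ) := by
  rw [card_eq_sum_card_fiberwise (f := fun v => s(v, σ v))
      fun v hv => mem_image_of_mem (fun v => s(v, σ v)) hv,
    sum_const_nat fun e he => ?_, mul_comm]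
  · rfl
  · obtain ⟨v, hv, rfl⟩ := mem_edgesOfPerm.mp he
    exact card_filter_support_eq_two hinv hv

theorem sign_eq_neg_one_pow_card_edgesOfPerm (hinv : ∀ v, σ (σ v) = v) :
    Perm.sign σ = (-1) ^ #(edgesOfPerm σ) := by
  have hsq : σ ^ 2 = 1 := Perm.ext fun v => hinv v
  rw [Perm.sign_of_pow_two_eq_one hsq, Perm.card_fixedPoints, Perm.sum_cycleType,
    Nat.sub_sub_self (card_le_univ _), card_support_eq_two_mul_card_edgesOfPerm hinv,
    Nat.mul_div_cancel_left _ two_pos]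

theorem prod_smul_one_sub_sqrtWeightAdjMatrix_eq_zero (hσ : ¬H.MovesAlongEdges σ) (t : ℝ) :
    ∏ i, (t • 1 - H.sqrtWeightAdjMatrix w) (σ i) i = 0 := by
  obtain ⟨v, hv, hadj⟩ : ∃ v, σ v ≠ v ∧ ¬H.Adj v (σ v) := by
    simpa [MovesAlongEdges] using hσ
  refine prod_eq_zero (mem_univ v) ?_
  rw [smul_one_sub_sqrtWeightAdjMatrix_apply, if_neg hv, if_neg fun h => hadj h.symm]

theorem MovesAlongEdges.sign_smul_prod_eq (hσ : H.MovesAlongEdges σ) (hinv : ∀ v, σ (σ v) = v)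
    (hw : ∀ e ∈ H.edgeSet, 0 ≤ w e) (t : ℝ) :
    Perm.sign σ • ∏ i, (t • 1 - H.sqrtWeightAdjMatrix w) (σ i) i =
      (∏ e ∈ edgesOfPerm σ, w e) * (-1) ^ #(edgesOfPerm σ) *
        t ^ (Fintype.card V - 2 * #(edgesOfPerm σ)) := by
  have hmoved : ∀ i ∈ σ.support,
      (t • 1 - H.sqrtWeightAdjMatrix w) (σ i) i = -1 * √(w s(i, σ i)) := fun i hi => by
    rw [smul_one_sub_sqrtWeightAdjMatrix_apply, if_neg (Perm.mem_support.mp hi),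
      if_pos (hσ i (Perm.mem_support.mp hi)).symm, Sym2.eq_swap, neg_one_mul]
  have hfixed : ∀ i ∈ σ.supportᶜ, (t • 1 - H.sqrtWeightAdjMatrix w) (σ i) i = t := fun i hi => by
    rw [smul_one_sub_sqrtWeightAdjMatrix_apply, if_pos (by simpa using hi)]
  have hsqrt : ∏ e ∈ edgesOfPerm σ, √(w e) ^ 2 = ∏ e ∈ edgesOfPerm σ, w e :=
    prod_congr rfl fun e he => Real.sq_sqrt (hw e ((hσ.isMatchingSet_edgesOfPerm hinv).1 e he))
  rw [← prod_mul_prod_compl σ.support, prod_congr rfl hmoved, prod_congr rfl hfixed,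
    prod_mul_distrib, prod_const, prod_const,
    prod_support_eq_prod_edgesOfPerm_sq hinv (fun e => √(w e)), hsqrt, card_compl,
    card_support_eq_two_mul_card_edgesOfPerm hinv, sign_eq_neg_one_pow_card_edgesOfPerm hinv,
    Units.smul_def, pow_mul]
  push_cast
  ring

theorem wmp_eq_det (hH : H.IsAcyclic) (hw : ∀ e ∈ H.edgeSet, 0 ≤ w e) (t : ℝ) :
    wmp H w t = (t • 1 - H.sqrtWeightAdjMatrix w).det := by
  have hinv : ∀ σ : Perm V, H.MovesAlongEdges σ → ∀ v, σ (σ v) = v :=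
    fun σ hσ => hσ.apply_apply_of_isAcyclic hH
  rw [Matrix.det_apply, ← sum_subset (subset_univ {σ | H.MovesAlongEdges σ}) fun σ _ hσ => by
    rw [prod_smul_one_sub_sqrtWeightAdjMatrix_eq_zero (by simpa using hσ), smul_zero]]
  refine sum_bij' (fun M hM => (mem_matchings.mp hM).perm) (fun σ _ => edgesOfPerm σ)
    (fun M hM => by simpa using (mem_matchings.mp hM).movesAlongEdges_perm)
    (fun σ hσ => ?_) (fun M hM => (mem_matchings.mp hM).edgesOfPerm_perm)
    (fun σ hσ => ?_) (fun M hM => ?_)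
  · simp only [mem_filter, mem_univ, true_and] at hσ
    exact mem_matchings.mpr (hσ.isMatchingSet_edgesOfPerm (hinv σ hσ))
  · simp only [mem_filter, mem_univ, true_and] at hσ
    exact hσ.perm_isMatchingSet_edgesOfPerm (hinv σ hσ)
  · have hM' := mem_matchings.mp hM
    rw [hM'.movesAlongEdges_perm.sign_smul_prod_eq (hinv _ hM'.movesAlongEdges_perm) hw,
      hM'.edgesOfPerm_perm]

end SimpleGraph

namespace Matrix

open scoped MatrixOrder

variable {n : Type*} [Fintype n]

theorem IsHermitian.exists_det_eq_zero_forall_dotProduct_le [DecidableEq n] [Nonempty n]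
    {A : Matrix n n ℝ} (hA : A.IsHermitian) :
    ∃ r : ℝ, (r • 1 - A).det = 0 ∧ ∀ x : n → ℝ, x ⬝ᵥ A *ᵥ x ≤ r * (x ⬝ᵥ x) := by
  obtain ⟨i, -, hi⟩ := univ.exists_max_image hA.eigenvalues univ_nonempty
  have hspec := hA.spectrum_real_eq_range_eigenvalues
  refine ⟨hA.eigenvalues i, ?_, fun x => ?_⟩
  · have hmem : hA.eigenvalues i ∈ spectrum ℝ A := hspec ▸ Set.mem_range_self i
    rwa [spectrum.mem_iff, isUnit_iff_isUnit_det, isUnit_iff_ne_zero, not_not,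
      Algebra.algebraMap_eq_smul_one] at hmem
  · have hle : A ≤ algebraMap ℝ _ (hA.eigenvalues i) := by
      refine le_algebraMap_of_spectrum_le fun r hr => ?_
      obtain ⟨j, rfl⟩ := hspec ▸ hr
      exact hi j (mem_univ j)
    have := (le_iff.mp hle).dotProduct_mulVec_nonneg x
    rw [Algebra.algebraMap_eq_smul_one, sub_mulVec, smul_mulVec, one_mulVec, dotProduct_sub,
      dotProduct_smul, star_trivial, smul_eq_mul] at this
    linarith

theorem dotProduct_mulVec_le_abs_dotProduct_mulVec_abs {A B : Matrix n n ℝ}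
    (hA : ∀ i j, 0 ≤ A i j) (hAB : ∀ i j, A i j ≤ B i j) (x : n → ℝ) :
    x ⬝ᵥ A *ᵥ x ≤ |x| ⬝ᵥ B *ᵥ |x| := by
  simp only [dotProduct, mulVec, mul_sum]
  refine sum_le_sum fun i _ => sum_le_sum fun j _ => ?_
  calc x i * (A i j * x j) = A i j * (x i * x j) := by ring
    _ ≤ A i j * |x i * x j| := mul_le_mul_of_nonneg_left (le_abs_self _) (hA i j)
    _ ≤ B i j * |x i * x j| := mul_le_mul_of_nonneg_right (hAB i j) (abs_nonneg _)
    _ = |x| i * (B i j * |x| j) := by rw [Pi.abs_apply, Pi.abs_apply, abs_mul]; ring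

theorem le_of_det_smul_one_sub_eq_zero [DecidableEq n] {A B : Matrix n n ℝ}
    (hA : ∀ i j, 0 ≤ A i j) (hAB : ∀ i j, A i j ≤ B i j) {r s : ℝ}
    (hB : ∀ x : n → ℝ, x ⬝ᵥ B *ᵥ x ≤ r * (x ⬝ᵥ x)) (hs : (s • 1 - A).det = 0) : s ≤ r := by
  obtain ⟨x, hx, hAx⟩ := exists_mulVec_eq_zero_iff.mpr hs
  rw [sub_mulVec, smul_mulVec, one_mulVec, sub_eq_zero] at hAx
  have hpos : 0 < x ⬝ᵥ x :=
    (sum_nonneg fun i _ => mul_self_nonneg (x i)).lt_of_ne' (dotProduct_self_eq_zero.not.mpr hx)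
  have habs : |x| ⬝ᵥ |x| = x ⬝ᵥ x := by simp [dotProduct, abs_mul_abs_self]
  refine le_of_mul_le_mul_right ?_ hpos
  calc s * (x ⬝ᵥ x) = x ⬝ᵥ A *ᵥ x := by rw [← hAx, dotProduct_smul, smul_eq_mul]
    _ ≤ |x| ⬝ᵥ B *ᵥ |x| := dotProduct_mulVec_le_abs_dotProduct_mulVec_abs hA hAB x
    _ ≤ r * (x ⬝ᵥ x) := habs ▸ hB |x|

end Matrix

/-- If `G` is a tree with positive edge weights and `G₁` is a subgraph of `G`, then the largest
real root of the weighted matching polynomial of `G₁` is at most that of `G`. -/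
theorem stmt_1 {V : Type*} [Fintype V] [DecidableEq V] (G G₁ : SimpleGraph V)
    (hT : G.IsTree) (hsub : G₁ ≤ G)
    (w : Sym2 V → ℝ) (hw : ∀ e ∈ G.edgeSet, 0 < w e)
    (t₁ t : ℝ)
    (ht₁ : IsGreatest {s : ℝ | wmp G₁ w s = 0} t₁)
    (ht : IsGreatest {s : ℝ | wmp G w s = 0} t) :
    t₁ ≤ t := by
  have : Nonempty V := hT.connected.nonempty
  have hw₀ : ∀ e ∈ G.edgeSet, 0 ≤ w e := fun e he => (hw e he).le
  have hw₁ : ∀ e ∈ G₁.edgeSet, 0 ≤ w e := fun e he => hw₀ e (edgeSet_mono hsub he)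
  obtain ⟨r, hr, hrayleigh⟩ :=
    (G.isHermitian_sqrtWeightAdjMatrix (w := w)).exists_det_eq_zero_forall_dotProduct_le
  have hrt : r ≤ t := ht.2 ((wmp_eq_det hT.isAcyclic hw₀ r).trans hr)
  have ht₁r : t₁ ≤ r :=
    Matrix.le_of_det_smul_one_sub_eq_zero sqrtWeightAdjMatrix_nonneg
      (sqrtWeightAdjMatrix_mono hsub) hrayleigh
      (wmp_eq_det (hT.isAcyclic.anti hsub) hw₁ t₁ ▸ ht₁.1)
  exact ht₁r.trans hrt
end

section
/- Let T be a tree, v a leaf with unique neighbor u, and T' = T - v. Suppose real numbers r_e ∈ [0,1) are given for each edge of T, and define r'_e = r_e for edges of T' not incident to u and r'_e = r_e/(1 - r_{uv}) for edges of T' incident to u. If F_{T'}(r', 1) > 0, then F_T(r, 1) > 0, where F denotes the multivariate matching polynomial. -/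
open Finset
open scoped Classical

/-- The multivariate matching polynomial
`F(x,t) = Σ_{M matching} (Π_{e∈M} x_e) (-t)^{|M|}`. -/
noncomputable def mmp {V : Type*} [Fintype V] [DecidableEq V] (G : SimpleGraph V)
    (x : Sym2 V → ℝ) (t : ℝ) : ℝ :=
  ∑ M ∈ matchings G, (∏ e ∈ M, x e) * (-t) ^ M.card

/-- Let `T` be a tree, `v` a leaf with unique neighbor `u`, and `T' = T - v`. With
`r_e ∈ [0,1)` on edges of `T` and `r'` defined by dividing by `1 - r_{uv}` on edges of `T'`
incident to `u`: if `F_{T'}(r',1) > 0` then `F_T(r,1) > 0`. -/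
theorem stmt_3 {V : Type*} [Fintype V] [DecidableEq V] (T T' : SimpleGraph V)
    (hT : T.IsTree) (v u : V) (huv : T.Adj u v)
    (hleaf : ∀ z, T.Adj v z ↔ z = u)
    (hT' : ∀ a b, T'.Adj a b ↔ T.Adj a b ∧ a ≠ v ∧ b ≠ v)
    (r r' : Sym2 V → ℝ)
    (hr : ∀ e ∈ T.edgeSet, 0 ≤ r e ∧ r e < 1)
    (hr' : ∀ e ∈ T'.edgeSet,
      r' e = if u ∈ e then r e / (1 - r s(u, v)) else r e)
    (hpos : 0 < mmp T' r' 1) :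
    0 < mmp T r 1 := by
  classical
  have he0T : s(u, v) ∈ T.edgeSet := huv
  obtain ⟨hc0, hc1⟩ := hr _ he0T
  set e0 : Sym2 V := s(u, v) with he0def
  set c : ℝ := r e0 with hcdef
  have hcpos : (0 : ℝ) < 1 - c := by linarith
  have hcne : (1 : ℝ) - c ≠ 0 := ne_of_gt hcpos
  have hve0 : v ∈ e0 := by rw [he0def]; simp
  have hue0 : u ∈ e0 := by rw [he0def]; simp
  -- edges of T' are edges of T not containing v
  have hedge : ∀ e : Sym2 V, e ∈ T'.edgeSet ↔ e ∈ T.edgeSet ∧ v ∉ e := by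
    intro e
    induction e using Sym2.inductionOn with
    | hf a b =>
      simp only [SimpleGraph.mem_edgeSet, hT' a b, Sym2.mem_iff]
      constructor
      · rintro ⟨h1, h2, h3⟩
        refine ⟨h1, ?_⟩
        rintro (rfl | rfl)
        · exact h2 rfl
        · exact h3 rfl
      · rintro ⟨h1, h2⟩
        push_neg at h2
        exact ⟨h1, Ne.symm h2.1, Ne.symm h2.2⟩
  -- the only edge of T containing v is e0
  have hvedge : ∀ e, e ∈ T.edgeSet → v ∈ e → e = e0 := by
    intro e
    induction e using Sym2.inductionOn with
    | hf a b =>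
      intro he hv
      simp only [SimpleGraph.mem_edgeSet] at he
      rw [Sym2.mem_iff] at hv
      rcases hv with rfl | rfl
      · have hb : b = u := (hleaf b).mp he
        subst hb
        rw [he0def, Sym2.eq_swap]
      · have ha : a = u := (hleaf a).mp he.symm
        subst ha
        rw [he0def]
  have hmem : ∀ (G : SimpleGraph V) (M : Finset (Sym2 V)),
      M ∈ matchings G ↔ IsMatchingSet G M := by
    intro G M; simp [matchings]
  -- weight function
  set f : Finset (Sym2 V) → ℝ := fun M => (∏ e ∈ M, r e) * (-1 : ℝ) ^ M.card with hfdef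
  set f' : Finset (Sym2 V) → ℝ := fun M => (∏ e ∈ M, r' e) * (-1 : ℝ) ^ M.card with hf'def
  have hmmpT : mmp T r 1 = ∑ M ∈ matchings T, f M := by
    simp [mmp, hfdef]
  have hmmpT' : mmp T' r' 1 = ∑ M ∈ matchings T', f' M := by
    simp [mmp, hf'def]
  -- matchings of T not containing e0 are exactly matchings of T'
  have lemA : (matchings T).filter (fun M => ¬ e0 ∈ M) = matchings T' := by
    ext M
    simp only [mem_filter, hmem]
    constructor
    · rintro ⟨⟨h1, h2⟩, h3⟩
      refine ⟨fun e he => (hedge e).mpr ⟨h1 e he, ?_⟩, h2⟩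
      intro hv
      exact h3 (by rw [← hvedge e (h1 e he) hv]; exact he)
    · rintro ⟨h1, h2⟩
      refine ⟨⟨fun e he => ((hedge e).mp (h1 e he)).1, h2⟩, fun h0 => ?_⟩
      exact ((hedge e0).mp (h1 e0 h0)).2 hve0
  -- sum over matchings of T containing e0
  have lemB : ∑ M ∈ (matchings T).filter (fun M => e0 ∈ M), f M
      = ∑ M ∈ (matchings T').filter (fun M => ¬ ∃ e ∈ M, u ∈ e), (-c) * f M := by
    refine Finset.sum_nbij' (fun M => M.erase e0) (fun M => insert e0 M)
      ?_ ?_ ?_ ?_ ?_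
    · -- erase lands in uncovered matchings of T'
      intro M hM
      rw [mem_filter] at hM ⊢
      obtain ⟨hMm, hMe0⟩ := hM
      obtain ⟨hMe, hMd⟩ := (hmem T M).mp hMm
      constructor
      · rw [hmem]
        constructor
        · intro e he
          have heM := Finset.mem_of_mem_erase he
          have hne : e ≠ e0 := Finset.ne_of_mem_erase he
          refine (hedge e).mpr ⟨hMe e heM, fun hv => hne (hvedge e (hMe e heM) hv)⟩
        · intro e he g hg
          exact hMd e (Finset.mem_of_mem_erase he) g (Finset.mem_of_mem_erase hg)
      · rintro ⟨e, he, hue⟩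
        have heM := Finset.mem_of_mem_erase he
        have hne : e ≠ e0 := Finset.ne_of_mem_erase he
        exact hMd e heM e0 hMe0 hne u hue hue0
    · -- insert lands in e0-containing matchings of T
      intro M hM
      rw [mem_filter] at hM ⊢
      obtain ⟨hMm, hMu⟩ := hM
      obtain ⟨hMe, hMd⟩ := (hmem T' M).mp hMm
      have hvnot : ∀ e ∈ M, v ∉ e := fun e he => ((hedge e).mp (hMe e he)).2
      have hunot : ∀ e ∈ M, u ∉ e := by
        intro e he hue
        exact hMu ⟨e, he, hue⟩
      constructor
      · rw [hmem]
        constructor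
        · intro e he
          rcases Finset.mem_insert.mp he with rfl | heM
          · exact he0T
          · exact ((hedge e).mp (hMe e heM)).1
        · intro e he g hg hne w hwe hwg
          rcases Finset.mem_insert.mp he with rfl | heM <;>
            rcases Finset.mem_insert.mp hg with rfl | hgM
          · exact hne rfl
          · rw [he0def, Sym2.mem_iff] at hwe
            rcases hwe with rfl | rfl
            · exact hunot g hgM hwg
            · exact hvnot g hgM hwg
          · rw [he0def, Sym2.mem_iff] at hwg
            rcases hwg with rfl | rfl
            · exact hunot e heM hwe
            · exact hvnot e heM hwe
          · exact hMd e heM g hgM hne w hwe hwg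
      · exact Finset.mem_insert_self e0 M
    · intro M hM
      rw [mem_filter] at hM
      exact Finset.insert_erase hM.2
    · intro M hM
      rw [mem_filter] at hM
      have he0M : e0 ∉ M := by
        intro h
        exact hM.2 ⟨e0, h, hue0⟩
      exact Finset.erase_insert he0M
    · intro M hM
      rw [mem_filter] at hM
      have hM0 := hM.2
      have hprod : ∏ e ∈ M, r e = r e0 * ∏ e ∈ M.erase e0, r e :=
        (Finset.mul_prod_erase M r hM0).symm
      have hcard : (M.erase e0).card + 1 = M.card := Finset.card_erase_add_one hM0
      rw [hfdef]
      simp only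
      rw [hprod, ← hcard, pow_succ]
      ring
  -- product with r' for covered matchings
  have hcovprod : ∀ M ∈ matchings T', (∃ e ∈ M, u ∈ e) →
      (∏ e ∈ M, r' e) = (∏ e ∈ M, r e) / (1 - c) := by
    rintro M hM ⟨e1, he1, hue1⟩
    obtain ⟨hMe, hMd⟩ := (hmem T' M).mp hM
    rw [← Finset.mul_prod_erase M r' he1, ← Finset.mul_prod_erase M r he1]
    have h1 : r' e1 = r e1 / (1 - c) := by
      rw [hr' e1 (hMe e1 he1), if_pos hue1]
    have h2 : ∏ e ∈ M.erase e1, r' e = ∏ e ∈ M.erase e1, r e := by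
      refine Finset.prod_congr rfl fun e he => ?_
      have heM := Finset.mem_of_mem_erase he
      have hne : e1 ≠ e := (Finset.ne_of_mem_erase he).symm
      have hu : u ∉ e := hMd e1 he1 e heM (Finset.ne_of_mem_erase he).symm u hue1
      rw [hr' e (hMe e heM), if_neg hu]
    rw [h1, h2, div_mul_eq_mul_div]
  have huncovprod : ∀ M ∈ matchings T', (¬ ∃ e ∈ M, u ∈ e) →
      (∏ e ∈ M, r' e) = ∏ e ∈ M, r e := by
    intro M hM hMu
    obtain ⟨hMe, _⟩ := (hmem T' M).mp hM
    refine Finset.prod_congr rfl fun e he => ?_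
    have hu : u ∉ e := fun h => hMu ⟨e, he, h⟩
    rw [hr' e (hMe e he), if_neg hu]
  set A : ℝ := ∑ M ∈ (matchings T').filter (fun M => ¬ ∃ e ∈ M, u ∈ e), f M with hAdef
  set B : ℝ := ∑ M ∈ (matchings T').filter (fun M => ∃ e ∈ M, u ∈ e), f M with hBdef
  have hT_eq : mmp T r 1 = (B + A) + (-c) * A := by
    rw [hmmpT, ← Finset.sum_filter_add_sum_filter_not (matchings T) (fun M => e0 ∈ M) f,
      lemA, lemB, ← Finset.mul_sum, ← hAdef]
    rw [← Finset.sum_filter_add_sum_filter_not (matchings T') (fun M => ∃ e ∈ M, u ∈ e) f,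
      ← hBdef, ← hAdef]
    ring
  have hT'_eq : mmp T' r' 1 = B / (1 - c) + A := by
    rw [hmmpT',
      ← Finset.sum_filter_add_sum_filter_not (matchings T') (fun M => ∃ e ∈ M, u ∈ e) f']
    have h1 : ∑ M ∈ (matchings T').filter (fun M => ∃ e ∈ M, u ∈ e), f' M = B / (1 - c) := by
      rw [hBdef, Finset.sum_div]
      refine Finset.sum_congr rfl fun M hM => ?_
      rw [mem_filter] at hM
      rw [hf'def, hfdef]
      simp only
      rw [hcovprod M hM.1 hM.2, div_mul_eq_mul_div]
    have h2 : ∑ M ∈ (matchings T').filter (fun M => ¬ ∃ e ∈ M, u ∈ e), f' M = A := by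
      rw [hAdef]
      refine Finset.sum_congr rfl fun M hM => ?_
      rw [mem_filter] at hM
      rw [hf'def, hfdef]
      simp only
      rw [huncovprod M hM.1 hM.2]
    rw [h1, h2]
  have hkey : mmp T r 1 = (1 - c) * mmp T' r' 1 := by
    rw [hT_eq, hT'_eq]
    field_simp
    ring
  rw [hkey]
  exact mul_pos hcpos hpos
end

section
/- Let T be a tree on n vertices and let λ be the largest eigenvalue of its adjacency matrix. For each vertex i of T let the cluster A_i consist of vertices v_{ij} for j adjacent to i. Build a bipartite-type blow-up graph G[T] where for each edge (i,j) of T, all pairs between A_i and A_j are connected except the pair (v_{ij}, v_{ji}). Then one cannot choose one vertex from each cluster A_i such that the chosen vertices induce a copy of T (i.e., such that for every edge (i,j) of T the chosen vertices in A_i and A_j are adjacent in G[T]). -/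
/-- Let `T` be a tree. In the blow-up graph where the cluster `A_i` consists of vertices
`v_{ij}` for `j` adjacent to `i`, and for each edge `(i,j)` of `T` all pairs between `A_i`
and `A_j` are joined except the pair `(v_{ij}, v_{ji})`, one cannot choose one vertex from
each cluster forming a transversal copy of `T`. A choice of a vertex `v_{i,c i} ∈ A_i` for
each `i` is encoded by a function `c : V → V` with `T.Adj i (c i)`; the chosen vertices in
`A_i` and `A_j` are adjacent in the blow-up iff `¬(c i = j ∧ c j = i)`. -/
theorem stmt_5 {V : Type*} [Fintype V] [Nonempty V] (T : SimpleGraph V) (hT : T.IsTree) :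
    ¬ ∃ c : V → V, (∀ i, T.Adj i (c i)) ∧
      ∀ i j, T.Adj i j → ¬(c i = j ∧ c j = i) := by
  classical
  rintro ⟨c, hadj, hno⟩
  let f : V → T.edgeFinset := fun i => ⟨s(i, c i), by
    simp [SimpleGraph.mem_edgeFinset, hadj i]⟩
  have hinj : Function.Injective f := by
    intro i j hij
    have h : s(i, c i) = s(j, c j) := congrArg Subtype.val hij
    rw [Sym2.eq_iff] at h
    rcases h with ⟨h1, _⟩ | ⟨h1, h2⟩
    · exact h1
    · exact absurd ⟨h2, h1.symm⟩ (hno i j (h2 ▸ hadj i))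
  have hcard := Fintype.card_le_of_injective f hinj
  rw [Fintype.card_coe] at hcard
  have := hT.card_edgeFinset
  omega
end

section
/- Let H be a graph with maximum degree Δ ≥ 2 and let t(H) be the largest root of its matching polynomial M(H,t) = Σ_k (-1)^k m_k(H) t^{n-2k}. If 0 ≤ r < 1/t(H)² and 0 < t ≤ 1, then the evaluation of the multivariate matching polynomial with all edge variables equal to r satisfies F_H(r, t) = Σ_k (-1)^k m_k(H) r^k t^k > 0. -/
open Finset
open scoped Classical

/-- The matching polynomial `M(H,t) = Σ_k (-1)^k m_k(H) t^(n-2k)`, written as a sum over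
matchings. -/
noncomputable def mp {V : Type*} [Fintype V] [DecidableEq V] (G : SimpleGraph V) (t : ℝ) : ℝ :=
  ∑ M ∈ matchings G, (-1 : ℝ) ^ M.card * t ^ (Fintype.card V - 2 * M.card)

/-!
Writing `x = r t`, all terms of `F_H(r, t) = Σ_M (-x)^{|M|}` are nonnegative when `x ≤ 0`, and
the empty matching contributes `1`. When `x > 0`, put `s = 1/√x`; then
`M(H, s) = s^n F_H(r, t)`, and `s > t(H)` because `x ≤ r < 1/t(H)²`. The matching polynomial is
monic, so it is positive beyond its largest root, hence so is `F_H(r, t)`.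
-/

open Polynomial

section Matchings

variable {V : Type*} [Fintype V] [DecidableEq V] (G : SimpleGraph V)

lemma empty_mem_matchings : (∅ : Finset (Sym2 V)) ∈ matchings G :=
  mem_filter.mpr ⟨mem_univ _, by simp [IsMatchingSet]⟩

lemma two_mul_card_le_of_mem_matchings {M : Finset (Sym2 V)} (hM : M ∈ matchings G) :
    2 * #M ≤ Fintype.card V := by
  obtain ⟨hedge, hdisj⟩ := (mem_filter.mp hM).2
  have hcover : #(M.biUnion Sym2.toFinset) = 2 * #M := by
    rw [card_biUnion, sum_const_nat, mul_comm]
    · exact fun e he => Sym2.card_toFinset_of_not_isDiag e (G.not_isDiag_of_mem_edgeSet (hedge e he))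
    · exact fun e he f hf hef => disjoint_left.mpr fun v hve hvf =>
        hdisj e he f hf hef v (Sym2.mem_toFinset.mp hve) (Sym2.mem_toFinset.mp hvf)
  exact hcover ▸ card_le_univ _

noncomputable def matchingPoly : ℝ[X] :=
  ∑ M ∈ matchings G, C ((-1 : ℝ) ^ #M) * X ^ (Fintype.card V - 2 * #M)

lemma eval_matchingPoly (s : ℝ) : (matchingPoly G).eval s = mp G s := by
  simp [matchingPoly, mp, eval_finsetSum]

lemma matchingPoly_monic : (matchingPoly G).Monic := by
  refine monic_of_natDegree_le_of_coeff_eq_one (Fintype.card V) ?_ ?_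
  · refine natDegree_sum_le_of_forall_le _ _ fun M _ => ?_
    exact (natDegree_C_mul_X_pow_le _ _).trans (Nat.sub_le _ _)
  · rw [matchingPoly, finsetSum_coeff, sum_eq_single_of_mem ∅ (empty_mem_matchings G)]
    · simp
    · intro M hM hMne
      have hlt : Fintype.card V - 2 * #M ≠ Fintype.card V := by
        have := two_mul_card_le_of_mem_matchings G hM
        have := card_pos.mpr (nonempty_iff_ne_empty.mpr hMne)
        omega
      rw [coeff_C_mul_X_pow, if_neg hlt.symm]

lemma mp_pos_of_forall_root_lt {s : ℝ} (hroots : ∀ y, mp G y = 0 → y < s) : 0 < mp G s := by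
  rw [← eval_matchingPoly]
  refine zero_lt_eval_of_roots_lt_of_leadingCoeff_nonneg (fun y hy => hroots y ?_) ?_
  · rwa [← eval_matchingPoly]
  · rw [(matchingPoly_monic G).leadingCoeff]
    exact zero_le_one

lemma mp_eq_pow_mul_sum {s : ℝ} (hs : s ≠ 0) :
    mp G s = s ^ Fintype.card V * ∑ M ∈ matchings G, (-1 : ℝ) ^ #M * ((s ^ 2)⁻¹) ^ #M := by
  rw [mp, mul_sum]
  refine sum_congr rfl fun M hM => ?_
  have hsplit : s ^ Fintype.card V = s ^ (Fintype.card V - 2 * #M) * (s ^ 2) ^ #M := by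
    rw [← pow_mul, ← pow_add, Nat.sub_add_cancel (two_mul_card_le_of_mem_matchings G hM)]
  rw [hsplit, inv_pow, mul_mul_mul_comm, mul_inv_cancel₀ (pow_ne_zero _ (pow_ne_zero _ hs)),
    mul_one, mul_comm]

lemma sum_matchings_pos_of_nonpos {x : ℝ} (hx : x ≤ 0) :
    0 < ∑ M ∈ matchings G, (-1 : ℝ) ^ #M * x ^ #M := by
  refine sum_pos' (fun M _ => ?_) ⟨∅, empty_mem_matchings G, by simp⟩
  rw [← mul_pow]
  exact pow_nonneg (by linarith) _

end Matchings

theorem stmt_7_general {V : Type*} [Fintype V] [DecidableEq V] (H : SimpleGraph V)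
    (tH : ℝ) (htH : IsGreatest {s : ℝ | mp H s = 0} tH)
    (r t : ℝ) (hr : r < 1 / tH ^ 2) (ht0 : 0 < t) (ht1 : t ≤ 1) :
    0 < ∑ M ∈ matchings H, (-1 : ℝ) ^ M.card * (r * t) ^ M.card := by
  rcases le_or_gt (r * t) 0 with hx | hx
  · exact sum_matchings_pos_of_nonpos H hx
  set s := (√(r * t))⁻¹
  have hs : 0 < s := inv_pos.mpr (Real.sqrt_pos.mpr hx)
  have hs2 : (s ^ 2)⁻¹ = r * t := by rw [inv_pow, inv_inv, Real.sq_sqrt hx.le]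
  have hr0 : 0 < r := pos_of_mul_pos_left hx ht0.le
  have hxr : r * t ≤ r := mul_le_of_le_one_right hr0.le ht1
  -- `1 / 0 = 0`, so `tH = 0` would force `r < 0`
  have htH2 : 0 < tH ^ 2 := by
    by_contra! h
    simp [le_antisymm h (sq_nonneg tH)] at hr
    linarith
  have htHs : tH < s := by
    have hsq : tH ^ 2 < s ^ 2 := by
      rw [← inv_inv (s ^ 2), hs2, lt_inv_comm₀ htH2 hx, ← one_div]
      exact hxr.trans_lt hr
    exact (le_abs_self tH).trans_lt (abs_lt_of_sq_lt_sq hsq hs.le)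
  have hmp : 0 < mp H s := mp_pos_of_forall_root_lt H fun y hy => (htH.2 hy).trans_lt htHs
  rw [mp_eq_pow_mul_sum H hs.ne', hs2] at hmp
  exact pos_of_mul_pos_right hmp (pow_nonneg hs.le _)

/-- Let `H` have maximum degree `Δ ≥ 2` and let `t(H)` be the largest real root of its
matching polynomial. If `0 ≤ r < 1/t(H)²` and `0 < t ≤ 1`, then
`F_H(r,t) = Σ_k (-1)^k m_k(H) (rt)^k > 0`. -/
theorem stmt_7 {V : Type*} [Fintype V] [DecidableEq V] (H : SimpleGraph V)
    [DecidableRel H.Adj] (hΔ : 2 ≤ H.maxDegree)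
    (tH : ℝ) (htH : IsGreatest {s : ℝ | mp H s = 0} tH)
    (r t : ℝ) (hr0 : 0 ≤ r) (hr : r < 1 / tH ^ 2) (ht0 : 0 < t) (ht1 : t ≤ 1) :
    0 < ∑ M ∈ matchings H, (-1 : ℝ) ^ M.card * (r * t) ^ M.card :=
  stmt_7_general H tH htH r t hr ht0 ht1
end

section
/- Let K_{n,m} be the complete bipartite graph and f a proper labeling of its vertices (a bijection f: {1,…,n+m} → V(K_{n,m}) such that {f(1),…,f(k)} induces a connected subgraph for all k). Then the monotone-path tree T_f(K_{n,m}) has spectral radius exactly √(n+m-1). -/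
open Finset
open scoped Classical

/-- A monotone path of a labeled graph `(H, f)` (with labels in `Fin (N+1)`), encoded by its
set of labels: it contains the label `0`, and consecutive labels (in increasing order) are
mapped by `f` to adjacent vertices of `H`. -/
def IsMonPath {N : ℕ} {W : Type*} (H : SimpleGraph W) (f : Fin (N + 1) ≃ W)
    (S : Finset (Fin (N + 1))) : Prop :=
  (0 : Fin (N + 1)) ∈ S ∧
    (S.sort (· ≤ ·)).Chain' fun a b => H.Adj (f a) (f b)

/-- The monotone-path tree `T_f(H)`: vertices are monotone paths, two being adjacent iff one
is obtained from the other by appending exactly one vertex (of larger label) at the end. -/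
noncomputable def MPT {N : ℕ} {W : Type*} (H : SimpleGraph W) (f : Fin (N + 1) ≃ W) :
    SimpleGraph {S : Finset (Fin (N + 1)) // IsMonPath H f S} :=
  SimpleGraph.fromRel fun p q =>
    ∃ a, a ∉ p.1 ∧ q.1 = insert a p.1 ∧ ∀ b ∈ p.1, b < a

/-!
Put `N = n + m - 1`. The tree is rooted at `{0}`, and the children of a path with last label `t`
are its extensions by a label `a > t` on the side opposite to `t`. Weight the labels backwards
from `N` by `c t = (√N - T t)⁻¹`, where `T t` is the total weight of the labels `a > t` opposite
to `t`. Then `w P = ∏_{a ∈ P, a ≠ 0} c a` satisfies `A w = √N w` at every non-root path `P`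
ending in `t`: the parent contributes `w P / c t` and the children contribute `w P * T t`.
For the weight sums `T_L i`, `T_R i` of the labels `> i` on either side,
`(√N - T_L i) * (√N - T_R i) = i`; this keeps every weight positive and, as a proper labeling
puts label `1` opposite label `0`, it also gives the equation `T 0 = √N` at the root.
A positive eigenvector of a nonnegative matrix bounds every real eigenvalue: compare `y` with `w`
where `|y| / w` is largest.
-/

open scoped Matrix

theorem Matrix.abs_le_of_mulVec_eq_smul_of_pos {ι 𝕜 : Type*} [Fintype ι] [Field 𝕜]
    [LinearOrder 𝕜] [IsStrictOrderedRing 𝕜] {A : Matrix ι ι 𝕜} (hA : ∀ i j, 0 ≤ A i j)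
    {w : ι → 𝕜} (hw : ∀ i, 0 < w i) {r : 𝕜} (hAw : A *ᵥ w = r • w) {μ : 𝕜} {y : ι → 𝕜}
    (hy : y ≠ 0) (hAy : A *ᵥ y = μ • y) : |μ| ≤ r := by
  obtain ⟨j, hj⟩ := Function.ne_iff.1 hy
  obtain ⟨u, -, hmax⟩ := exists_max_image univ (fun i => |y i| / w i) ⟨j, mem_univ j⟩
  set t := |y u| / w u
  have hbound : ∀ i, |y i| ≤ t * w i := fun i => (div_le_iff₀ (hw i)).1 (hmax i (mem_univ i))
  have ht : 0 < t := (div_pos (abs_pos.2 hj) (hw j)).trans_le (hmax j (mem_univ j))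
  have hyu : |y u| = t * w u := (div_mul_cancel₀ _ (hw u).ne').symm
  have key : |μ| * (t * w u) ≤ r * (t * w u) :=
    calc |μ| * (t * w u) = |∑ i, A u i * y i| := by
          rw [← hyu, ← abs_mul, ← smul_eq_mul, ← Pi.smul_apply, ← hAy]; rfl
      _ ≤ ∑ i, A u i * (t * w i) := by
          refine (abs_sum_le_sum_abs _ _).trans (sum_le_sum fun i _ => ?_)
          rw [abs_mul, abs_of_nonneg (hA u i)]
          exact mul_le_mul_of_nonneg_left (hbound i) (hA u i)
      _ = t * (A *ᵥ w) u := by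
          simp only [mulVec, dotProduct, mul_sum]
          exact sum_congr rfl fun i _ => by ring
      _ = r * (t * w u) := by rw [hAw, Pi.smul_apply, smul_eq_mul]; ring
  exact le_of_mul_le_mul_right key (mul_pos ht (hw u))

namespace Finset

variable {α : Type*} [LinearOrder α] {s t : Finset α} {a : α}

theorem sort_insert_of_forall_lt (h : ∀ b ∈ s, b < a) :
    (insert a s).sort (· ≤ ·) = s.sort (· ≤ ·) ++ [a] := by
  have has : a ∉ s := fun ha => (h a ha).false
  refine List.Perm.eq_of_pairwise' (pairwise_sort _ _) ?_ ?_
  · simp only [List.pairwise_append, pairwise_sort, List.pairwise_singleton, List.mem_singleton,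
      mem_sort, true_and]
    rintro b hb _ rfl
    exact (h b hb).le
  · rw [← Multiset.coe_eq_coe, ← Multiset.coe_add, sort_eq, sort_eq, insert_val_of_notMem has,
      Multiset.coe_singleton, add_comm, Multiset.singleton_add]

theorem getLast?_sort (hs : s.Nonempty) : (s.sort (· ≤ ·)).getLast? = some (s.max' hs) := by
  rw [List.getLast?_eq_getElem?, List.getElem?_eq_getElem, max'_eq_sorted_last]

theorem max'_insert_of_forall_lt (h : ∀ b ∈ s, b < a) :
    (insert a s).max' (insert_nonempty a s) = a :=
  le_antisymm (max'_le _ _ _ fun b hb => (mem_insert.1 hb).elim le_of_eq fun hb => (h b hb).le)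
    (le_max' _ _ (mem_insert_self a s))

def IsExtension (s t : Finset α) : Prop := ∃ a, a ∉ s ∧ t = insert a s ∧ ∀ b ∈ s, b < a

theorem isExtension_iff : IsExtension s t ↔ ∃ ht : t.Nonempty, s = t.erase (t.max' ht) := by
  constructor
  · rintro ⟨a, has, rfl, hlt⟩
    exact ⟨insert_nonempty a s, by rw [max'_insert_of_forall_lt hlt, erase_insert has]⟩
  · rintro ⟨ht, rfl⟩
    exact ⟨t.max' ht, notMem_erase _ _, (insert_erase (max'_mem t ht)).symm,
      fun b hb => lt_of_le_of_ne (le_max' t b (mem_of_mem_erase hb)) (ne_of_mem_erase hb)⟩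

theorem isExtension_insert (h : ∀ b ∈ s, b < a) : IsExtension s (insert a s) :=
  ⟨a, fun ha => (h a ha).false, rfl, h⟩

theorem IsExtension.card_eq (h : IsExtension s t) : t.card = s.card + 1 := by
  obtain ⟨a, has, rfl, -⟩ := h
  exact card_insert_of_notMem has

end Finset

section MonotonePaths

variable {W R : Type*} [CommRing R] {H : SimpleGraph W} {N : ℕ} {f : Fin (N + 1) ≃ W}

theorem isMonPath_iff {S : Finset (Fin (N + 1))} :
    IsMonPath H f S ↔ 0 ∈ S ∧ (S.sort (· ≤ ·)).IsChain fun a b => H.Adj (f a) (f b) :=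
  Iff.rfl

theorem isMonPath_singleton_zero : IsMonPath H f {0} :=
  ⟨mem_singleton_self 0, by rw [sort_singleton]; exact List.isChain_singleton 0⟩

theorem isMonPath_insert_iff {S : Finset (Fin (N + 1))} {a : Fin (N + 1)} (hS : 0 ∈ S)
    (ha : ∀ b ∈ S, b < a) :
    IsMonPath H f (insert a S) ↔ IsMonPath H f S ∧ H.Adj (f (S.max' ⟨0, hS⟩)) (f a) := by
  simp [isMonPath_iff, sort_insert_of_forall_lt ha, List.isChain_append, getLast?_sort ⟨0, hS⟩,
    hS]

variable (H f) in
abbrev MonPath := {S : Finset (Fin (N + 1)) // IsMonPath H f S}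

def pathWeight (c : Fin (N + 1) → R) (S : Finset (Fin (N + 1))) : R :=
  ∏ b ∈ S.erase 0, c b

theorem pathWeight_insert (c : Fin (N + 1) → R) {S : Finset (Fin (N + 1))} {a : Fin (N + 1)}
    (ha0 : a ≠ 0) (haS : a ∉ S) : pathWeight c (insert a S) = pathWeight c S * c a := by
  rw [pathWeight, pathWeight, erase_insert_of_ne ha0,
    prod_insert fun h => haS (mem_of_mem_erase h), mul_comm]

namespace MonPath

def top (P : MonPath H f) : Fin (N + 1) := P.1.max' ⟨0, P.2.1⟩

theorem top_mem (P : MonPath H f) : P.top ∈ P.1 := max'_mem _ _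

theorem le_top (P : MonPath H f) {b : Fin (N + 1)} (hb : b ∈ P.1) : b ≤ P.top := le_max' _ _ hb

theorem top_lt_iff (P : MonPath H f) {a : Fin (N + 1)} : P.top < a ↔ ∀ b ∈ P.1, b < a :=
  max'_lt_iff _ _

theorem isMonPath_insert_iff (P : MonPath H f) {a : Fin (N + 1)} (ha : P.top < a) :
    IsMonPath H f (insert a P.1) ↔ H.Adj (f P.top) (f a) := by
  rw [_root_.isMonPath_insert_iff P.2.1 (P.top_lt_iff.1 ha)]
  exact and_iff_right P.2

theorem isExtension_iff {P Q : MonPath H f} :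
    IsExtension P.1 Q.1 ↔ P.top < Q.top ∧ Q.1 = insert Q.top P.1 := by
  constructor
  · rintro ⟨a, -, hQ, hlt⟩
    have htop : Q.top = a := by simp only [top, hQ, max'_insert_of_forall_lt hlt]
    exact ⟨htop ▸ P.top_lt_iff.2 hlt, htop ▸ hQ⟩
  · rintro ⟨hlt, hQ⟩
    exact ⟨Q.top, fun h => (P.top_lt_iff.1 hlt _ h).false, hQ, P.top_lt_iff.1 hlt⟩

theorem isMonPath_erase_top (P : MonPath H f) (ht : P.top ≠ 0) :
    IsMonPath H f (P.1.erase P.top) := by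
  have h0 : 0 ∈ P.1.erase P.top := mem_erase.2 ⟨Ne.symm ht, P.2.1⟩
  have hlt : ∀ b ∈ P.1.erase P.top, b < P.top := fun b hb =>
    lt_of_le_of_ne (P.le_top (mem_of_mem_erase hb)) (ne_of_mem_erase hb)
  refine ((_root_.isMonPath_insert_iff h0 hlt).1 ?_).1
  rw [insert_erase P.top_mem]
  exact P.2

def parent (P : MonPath H f) (ht : P.top ≠ 0) : MonPath H f :=
  ⟨P.1.erase P.top, P.isMonPath_erase_top ht⟩

theorem isExtension_iff_eq_parent {P Q : MonPath H f} (ht : P.top ≠ 0) :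
    IsExtension Q.1 P.1 ↔ Q = P.parent ht := by
  rw [Finset.isExtension_iff, Subtype.ext_iff]
  exact ⟨fun ⟨_, h⟩ => h, fun h => ⟨⟨0, P.2.1⟩, h⟩⟩

theorem not_isExtension_of_top_eq_zero {P : MonPath H f} (ht : P.top = 0) (Q : MonPath H f) :
    ¬ IsExtension Q.1 P.1 := by
  rw [Finset.isExtension_iff]
  rintro ⟨_, hQ⟩
  exact notMem_erase _ _ (ht ▸ hQ ▸ Q.2.1)

theorem pathWeight_eq_parent (c : Fin (N + 1) → R) (P : MonPath H f) (ht : P.top ≠ 0) :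
    pathWeight c P.1 = pathWeight c (P.parent ht).1 * c P.top := by
  rw [parent, ← pathWeight_insert c ht (notMem_erase _ _), insert_erase P.top_mem]

theorem sum_extensions_pathWeight (c : Fin (N + 1) → R) (P : MonPath H f) :
    ∑ Q : MonPath H f with IsExtension P.1 Q.1, pathWeight c Q.1 =
      pathWeight c P.1 * ∑ a with P.top < a ∧ H.Adj (f P.top) (f a), c a := by
  rw [mul_sum]
  refine sum_bij' (fun (Q : MonPath H f) _ => Q.top)
    (fun a ha => (⟨insert a P.1, (P.isMonPath_insert_iff (mem_filter.1 ha).2.1).2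
      (mem_filter.1 ha).2.2⟩ : MonPath H f)) ?_ ?_ ?_ ?_ ?_
  · intro Q hQ
    obtain ⟨hlt, hQ⟩ := isExtension_iff.1 (mem_filter.1 hQ).2
    have hQ2 := Q.2
    rw [hQ, P.isMonPath_insert_iff hlt] at hQ2
    exact mem_filter.2 ⟨mem_univ _, hlt, hQ2⟩
  · intro a ha
    exact mem_filter.2 ⟨mem_univ _, isExtension_insert (P.top_lt_iff.1 (mem_filter.1 ha).2.1)⟩
  · intro Q hQ
    exact Subtype.ext (isExtension_iff.1 (mem_filter.1 hQ).2).2.symm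
  · intro a ha
    exact max'_insert_of_forall_lt (P.top_lt_iff.1 (mem_filter.1 ha).2.1)
  · intro Q hQ
    obtain ⟨hlt, hQ⟩ := isExtension_iff.1 (mem_filter.1 hQ).2
    have hne : Q.top ≠ 0 := ((Fin.zero_le _).trans_lt hlt).ne'
    rw [hQ, pathWeight_insert c hne fun h => (hlt.trans_le (P.le_top h)).false]

end MonPath

theorem mpt_adj_iff {P Q : MonPath H f} :
    (MPT H f).Adj P Q ↔ IsExtension P.1 Q.1 ∨ IsExtension Q.1 P.1 := by
  refine (SimpleGraph.fromRel_adj _ _ _).trans (and_iff_right_of_imp ?_)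
  rintro (h | h) rfl <;> simpa using IsExtension.card_eq h

theorem mpt_adjMatrix_mulVec_apply (y : MonPath H f → R) (P : MonPath H f) :
    ((MPT H f).adjMatrix R *ᵥ y) P =
      ∑ Q with IsExtension P.1 Q.1, y Q + ∑ Q with IsExtension Q.1 P.1, y Q := by
  rw [SimpleGraph.adjMatrix_mulVec_apply, SimpleGraph.neighborFinset_eq_filter]
  simp_rw [mpt_adj_iff]
  rw [filter_or, sum_union]
  refine disjoint_filter.2 fun Q _ h h' => ?_
  have := h.card_eq
  have := h'.card_eq
  omega

theorem mpt_adjMatrix_mulVec_pathWeight (c : Fin (N + 1) → R) (r : R)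
    (hroot : ∑ a with 0 < a ∧ H.Adj (f 0) (f a), c a = r)
    (hstep : ∀ t, t ≠ 0 → 1 + c t * ∑ a with t < a ∧ H.Adj (f t) (f a), c a = r * c t) :
    (MPT H f).adjMatrix R *ᵥ (fun P => pathWeight c P.1) = r • fun P => pathWeight c P.1 := by
  refine funext fun (P : MonPath H f) => ?_
  rw [mpt_adjMatrix_mulVec_apply, MonPath.sum_extensions_pathWeight, Pi.smul_apply, smul_eq_mul]
  by_cases ht : P.top = 0
  · rw [sum_eq_zero fun Q hQ =>
      absurd (mem_filter.1 hQ).2 (MonPath.not_isExtension_of_top_eq_zero ht Q), ht, hroot]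
    ring
  · simp_rw [MonPath.isExtension_iff_eq_parent ht]
    rw [filter_eq', if_pos (mem_univ _), sum_singleton, P.pathWeight_eq_parent c ht]
    linear_combination pathWeight c (P.parent ht).1 * hstep P.top ht

theorem SimpleGraph.adj_zero_one_of_connected_induce (hN : 1 ≤ N)
    (hf : (H.induce {v | ∃ i ≤ 1, f i = v}).Connected) : H.Adj (f 0) (f 1) := by
  have h1 : ((1 : Fin (N + 1)) : ℕ) = 1 := by rw [Fin.val_one', Nat.mod_eq_of_lt (by omega)]
  let x : {v | ∃ i ≤ 1, f i = v} := ⟨f 0, 0, Fin.zero_le _, rfl⟩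
  let y : {v | ∃ i ≤ 1, f i = v} := ⟨f 1, 1, le_rfl, rfl⟩
  have hxy : x ≠ y := fun h => by
    have := f.injective (congrArg Subtype.val h)
    simp only [Fin.ext_iff, Fin.val_zero, h1] at this
    exact zero_ne_one this
  obtain ⟨p⟩ := hf.preconnected x y
  have hadj := p.adj_snd (Walk.not_nil_of_ne hxy)
  obtain ⟨i, hi, hpi⟩ := p.snd.2
  obtain rfl | rfl : i = 0 ∨ i = 1 := by
    simp only [Fin.ext_iff, Fin.le_def, h1, Fin.val_zero] at hi ⊢
    omega
  · exact absurd hadj (by simp [← hpi, x])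
  · rwa [show p.snd = y from Subtype.ext hpi.symm] at hadj

end MonotonePaths

section LabelWeight

variable (N : ℕ) (s : ℕ → Bool)

-- `attach` only serves the termination proof; `labelWeight_eq` is the usable form.
noncomputable def labelWeight (i : ℕ) : ℝ :=
  (√N - ∑ a ∈ (Ioc i N).attach, if s a = s i then 0 else labelWeight a)⁻¹
termination_by N + 1 - i
decreasing_by have := mem_Ioc.1 a.2; omega

noncomputable def sideSum (i : ℕ) (b : Bool) : ℝ :=
  ∑ a ∈ Ioc i N with s a = b, labelWeight N s a

variable {N s}

theorem labelWeight_eq (i : ℕ) : labelWeight N s i = (√N - sideSum N s i (!s i))⁻¹ := by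
  rw [labelWeight.eq_1, sideSum, sum_filter, ← sum_attach (Ioc i N)]
  congr 2
  refine sum_congr rfl fun a _ => ?_
  cases s a <;> cases s i <;> rfl

theorem sideSum_eq_add {i : ℕ} (b : Bool) (hi : i < N) :
    sideSum N s i b =
      (if s (i + 1) = b then labelWeight N s (i + 1) else 0) + sideSum N s (i + 1) b := by
  rw [sideSum, sideSum, sum_filter, sum_filter, ← Icc_add_one_left_eq_Ioc,
    ← Ioc_insert_left (by omega : i + 1 ≤ N), sum_insert left_notMem_Ioc]

theorem sideSum_lt_sqrt_and_mul_eq {i : ℕ} (hi : 0 < i) (hiN : i ≤ N) (b : Bool) :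
    sideSum N s i b < √N ∧ (√N - sideSum N s i b) * (√N - sideSum N s i !b) = i := by
  induction hiN using Nat.decreasingInduction generalizing b with
  | self =>
    have hN : (0 : ℝ) < N := by exact_mod_cast hi
    simp [sideSum, hN]
  | of_succ k hk ih =>
    set b₀ := s (k + 1)
    obtain ⟨hlt, hprod⟩ := ih (by omega) b₀
    obtain ⟨hlt', -⟩ := ih (by omega) !b₀
    have hsame : sideSum N s k b₀ = labelWeight N s (k + 1) + sideSum N s (k + 1) b₀ := by
      simp [sideSum_eq_add b₀ hk, b₀]
    have hother : sideSum N s k (!b₀) = sideSum N s (k + 1) (!b₀) := by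
      simp [sideSum_eq_add (!b₀) hk, b₀]
    have hweight : labelWeight N s (k + 1) * (√N - sideSum N s (k + 1) !b₀) = 1 := by
      rw [labelWeight_eq]
      exact inv_mul_cancel₀ (sub_pos.2 hlt').ne'
    have hprod_k : (√N - sideSum N s k b₀) * (√N - sideSum N s k !b₀) = k := by
      rw [hsame, hother]
      push_cast at hprod
      linear_combination hprod - hweight
    have hlt_other : sideSum N s k (!b₀) < √N := hother ▸ hlt'
    have hlt_same : sideSum N s k b₀ < √N := by
      have : (0 : ℝ) < k := by exact_mod_cast hi
      nlinarith
    obtain rfl | rfl : b = b₀ ∨ b = !b₀ := by cases b <;> cases b₀ <;> simp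
    · exact ⟨hlt_same, hprod_k⟩
    · rw [Bool.not_not, mul_comm]
      exact ⟨hlt_other, hprod_k⟩

theorem labelWeight_pos {i : ℕ} (hi : 0 < i) (hiN : i ≤ N) : 0 < labelWeight N s i := by
  rw [labelWeight_eq]
  exact inv_pos.2 (sub_pos.2 (sideSum_lt_sqrt_and_mul_eq hi hiN _).1)

theorem labelWeight_mul_sub_sideSum {i : ℕ} (hi : 0 < i) (hiN : i ≤ N) :
    labelWeight N s i * (√N - sideSum N s i (!s i)) = 1 := by
  rw [labelWeight_eq]
  exact inv_mul_cancel₀ (sub_pos.2 (sideSum_lt_sqrt_and_mul_eq hi hiN _).1).ne'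

theorem sideSum_zero (hN : 1 ≤ N) (h01 : s 1 = !s 0) : sideSum N s 0 (!s 0) = √N := by
  obtain ⟨hlt, hprod⟩ := sideSum_lt_sqrt_and_mul_eq (s := s) one_pos hN (s 0)
  have hweight := labelWeight_mul_sub_sideSum (s := s) one_pos hN
  rw [h01, Bool.not_not] at hweight
  have hfactor : (labelWeight N s 1 - (√N - sideSum N s 1 !s 0)) *
      (√N - sideSum N s 1 (s 0)) = 0 := by
    rw [Nat.cast_one] at hprod
    linear_combination hweight - hprod
  have hweight_one := (mul_eq_zero.1 hfactor).resolve_right (sub_pos.2 hlt).ne'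
  rw [sideSum_eq_add _ (by omega), zero_add, if_pos h01]
  linarith

end LabelWeight

theorem Fin.sum_filter_lt_eq_sum_Ioc {M : Type*} [AddCommMonoid M] {N : ℕ} (t : Fin (N + 1))
    (p : ℕ → Prop) [DecidablePred p] (g : ℕ → M) :
    ∑ a : Fin (N + 1) with t < a ∧ p a, g a = ∑ a ∈ Ioc (t : ℕ) N with p a, g a := by
  rw [← Ioo_add_one_right_eq_Ioc, ← Fin.map_valEmbedding_Ioi, filter_map, sum_map]
  congr 1
  ext a
  simp

theorem completeBipartiteGraph_adj_iff {α β : Type*} {v w : α ⊕ β} :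
    (completeBipartiteGraph α β).Adj v w ↔ v.isLeft ≠ w.isLeft := by
  cases v <;> cases w <;> simp

section CompleteBipartite

variable {α β : Type*} {N : ℕ} (f : Fin (N + 1) ≃ α ⊕ β)

def labelSide (i : ℕ) : Bool := (f (Fin.ofNat (N + 1) i)).isLeft

noncomputable def bipartiteWeight (P : MonPath (completeBipartiteGraph α β) f) : ℝ :=
  pathWeight (fun a => labelWeight N (labelSide f) a) P.1

variable {f}

theorem labelSide_val (a : Fin (N + 1)) : labelSide f a = (f a).isLeft := by
  rw [labelSide, Fin.ofNat_val_eq_self]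

theorem sum_adj_labelWeight (t : Fin (N + 1)) :
    ∑ a with t < a ∧ (completeBipartiteGraph α β).Adj (f t) (f a),
        labelWeight N (labelSide f) a = sideSum N (labelSide f) t (!labelSide f t) := by
  rw [sideSum, ← Fin.sum_filter_lt_eq_sum_Ioc t (fun a => labelSide f a = !labelSide f t)]
  refine sum_congr (filter_congr fun a _ => ?_) fun _ _ => rfl
  rw [completeBipartiteGraph_adj_iff, labelSide_val, labelSide_val, Bool.eq_not_iff, ne_comm]

theorem bipartiteWeight_pos (P : MonPath (completeBipartiteGraph α β) f) :
    0 < bipartiteWeight f P :=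
  prod_pos fun b hb =>
    labelWeight_pos (Nat.pos_of_ne_zero (Fin.val_ne_zero_iff.2 (ne_of_mem_erase hb))) b.is_le

theorem mpt_completeBipartite_mulVec_bipartiteWeight (hN : 1 ≤ N)
    (h01 : (completeBipartiteGraph α β).Adj (f 0) (f 1)) :
    (MPT (completeBipartiteGraph α β) f).adjMatrix ℝ *ᵥ bipartiteWeight f =
      √N • bipartiteWeight f := by
  refine mpt_adjMatrix_mulVec_pathWeight _ _ ?_ fun t ht => ?_
  · have h01' : labelSide f 1 = !labelSide f 0 := by
      rw [Bool.eq_not_iff, ne_comm]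
      exact completeBipartiteGraph_adj_iff.1 h01
    rw [sum_adj_labelWeight, Fin.val_zero, sideSum_zero hN h01']
  · rw [sum_adj_labelWeight]
    linear_combination
      -labelWeight_mul_sub_sideSum (Nat.pos_of_ne_zero (Fin.val_ne_zero_iff.2 ht)) t.is_le

end CompleteBipartite

/-- For any proper labeling `f` of the complete bipartite graph `K_{n,m}` (i.e. every initial
segment of labels induces a connected subgraph), the monotone-path tree `T_f(K_{n,m})` has
spectral radius (largest eigenvalue of its adjacency matrix) exactly `√(n+m-1)`. -/
theorem stmt_10 (n m N : ℕ) (hn : 1 ≤ n) (hm : 1 ≤ m) (hN : N + 1 = n + m)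
    (f : Fin (N + 1) ≃ (Fin n ⊕ Fin m))
    (hf : ∀ k : Fin (N + 1),
      ((completeBipartiteGraph (Fin n) (Fin m)).induce {v | ∃ i ≤ k, f i = v}).Connected) :
    IsGreatest
      {μ : ℝ | ∃ y : {S : Finset (Fin (N + 1)) //
            IsMonPath (completeBipartiteGraph (Fin n) (Fin m)) f S} → ℝ,
          y ≠ 0 ∧
          (Matrix.of fun p q =>
              if (MPT (completeBipartiteGraph (Fin n) (Fin m)) f).Adj p q then (1 : ℝ)
              else 0).mulVec y = μ • y}
      (Real.sqrt ((n : ℝ) + (m : ℝ) - 1)) := by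
  have hN1 : 1 ≤ N := by omega
  have hsqrt : √((n : ℝ) + m - 1) = √N := by
    rw [← Nat.cast_add, ← hN, Nat.cast_succ, add_sub_cancel_right]
  have hAw := mpt_completeBipartite_mulVec_bipartiteWeight hN1
    (SimpleGraph.adj_zero_one_of_connected_induce hN1 (hf 1))
  rw [hsqrt]
  refine ⟨⟨bipartiteWeight f, fun h => ?_, hAw⟩, ?_⟩
  · exact (bipartiteWeight_pos ⟨{0}, isMonPath_singleton_zero⟩).ne' (congrFun h _)
  · rintro μ ⟨y, hy, hAy⟩
    exact (le_abs_self μ).trans <| Matrix.abs_le_of_mulVec_eq_smul_of_pos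
      (fun _ _ => ite_nonneg zero_le_one le_rfl) bipartiteWeight_pos hAw hy hAy
end

section
/- Let α, β, γ ∈ [0,1] satisfy αβ + γ > 1, βγ + α > 1, and γα + β > 1. Then any weighted blow-up graph of the triangle with edge densities at least α, β, γ between the three pairs of clusters contains a triangle as a transversal (one vertex chosen from each cluster, pairwise adjacent). -/
open Finset
open scoped Classical

set_option maxHeartbeats 1000000





private lemma nonneg_of_mul_pos {c x : ℝ} (hc : 0 < c) (h : 0 ≤ c * x) : 0 ≤ x := by
  nlinarith

private lemma le_of_mul_right {a b c : ℝ} (hc : 0 < c) (h : a * c ≤ b * c) : a ≤ b := by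
  nlinarith

/-- B2 -/
private lemma bstt_B2 (β γ u₁ u₂ : ℝ) (hb0 : 0 ≤ β) (hbγ : β ≤ γ) (hbg : 1 < β + γ)
    (hu10 : 0 ≤ u₁) (hu1γ : u₁ ≤ γ) (hγu2 : γ < u₂) (hu21 : u₂ ≤ 1)
    (hW : β + u₁ ≤ 1) (hbr : β * γ * γ ≤ β + γ - 1) :
    β * γ * (u₂ - u₁) ^ 2 ≤ (γ - u₁) * (β + u₂ - 1) := by
  have hγ0 : (0:ℝ) < γ := by linarith
  have hγlt1 : γ < 1 := by linarith
  have hbγ1 : β * γ ≤ 1 := by nlinarith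
  have hPγ : 0 ≤ (γ - u₁) * (β + γ - 1) - β * γ * (γ - u₁) ^ 2 := by
    nlinarith [mul_nonneg (sub_nonneg.2 hu1γ) (mul_nonneg (mul_nonneg hb0 hγ0.le) hu10),
      mul_nonneg (sub_nonneg.2 hu1γ) (sub_nonneg.2 (show β * γ * γ ≤ β + γ - 1 from hbr))]
  have hP1 : 0 ≤ (γ - u₁) * β - β * γ * (1 - u₁) ^ 2 := by
    have hbr' : 1 ≤ γ * (1 + β) := by nlinarith
    nlinarith [mul_nonneg hb0 hu10, mul_nonneg (mul_nonneg hb0 hu10) hu10,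
      mul_nonneg (mul_nonneg hb0 hu10) (sub_nonneg.2 hW),
      mul_nonneg (mul_nonneg hb0 hu10) (sub_nonneg.2 hγlt1.le)]
  have h3 : 0 ≤ (1 - u₂) * ((γ - u₁) * (β + γ - 1) - β * γ * (γ - u₁) ^ 2) :=
    mul_nonneg (by linarith) hPγ
  have h4 : 0 ≤ (u₂ - γ) * ((γ - u₁) * β - β * γ * (1 - u₁) ^ 2) :=
    mul_nonneg (by linarith) hP1
  have h5 : 0 ≤ β * γ * (u₂ - γ) * (1 - u₂) * (1 - γ) := by
    apply mul_nonneg; apply mul_nonneg; apply mul_nonneg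
    · exact mul_nonneg hb0 hγ0.le
    all_goals linarith
  have hid : (1 - γ) * ((γ - u₁) * (β + u₂ - 1) - β * γ * (u₂ - u₁) ^ 2)
      = (1 - u₂) * ((γ - u₁) * (β + γ - 1) - β * γ * (γ - u₁) ^ 2)
      + (u₂ - γ) * ((γ - u₁) * β - β * γ * (1 - u₁) ^ 2)
      + β * γ * (u₂ - γ) * (1 - u₂) * (1 - γ) := by ring
  have := nonneg_of_mul_pos (show (0:ℝ) < 1 - γ by linarith)
    (by rw [hid]; linarith : 0 ≤ (1 - γ) * ((γ - u₁) * (β + u₂ - 1) - β * γ * (u₂ - u₁) ^ 2))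
  linarith

/-- B5 -/
private lemma bstt_B5 (β γ u₁ u₂ : ℝ) (hb0 : 0 ≤ β) (hbγ : β ≤ γ) (hbg : 1 < β + γ)
    (hu10 : 0 ≤ u₁) (hu1γ : u₁ ≤ γ) (hγu2 : γ < u₂) (hu21 : u₂ ≤ 1)
    (hW : β + u₁ ≤ 1) (hbr : β + γ - 1 ≤ β * γ * γ) :
    (β + γ - 1) * (u₂ - u₁) ^ 2 ≤ γ * ((γ - u₁) * (β + u₂ - 1)) := by
  have hγ0 : (0:ℝ) < γ := by linarith
  have hγlt1 : γ < 1 := by linarith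
  have hP5γ : 0 ≤ γ * (γ - u₁) * (β + γ - 1) - (β + γ - 1) * (γ - u₁) ^ 2 := by
    nlinarith [mul_nonneg (mul_nonneg (show (0:ℝ) ≤ β + γ - 1 by linarith) (sub_nonneg.2 hu1γ)) hu10]
  have hP51 : 0 ≤ γ * (γ - u₁) * β - (β + γ - 1) * (1 - u₁) ^ 2 := by
    have hc1 : 0 ≤ β * γ * γ - (β + γ - 1) := by linarith
    have hc2 : 0 ≤ β * (β + γ - 1) * (γ - β) :=
      mul_nonneg (mul_nonneg hb0 (by linarith)) (by linarith)
    have hid5 : (1 - β) * (γ * (γ - u₁) * β - (β + γ - 1) * (1 - u₁) ^ 2)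
        = (1 - β - u₁) * (β * γ * γ - (β + γ - 1))
        + u₁ * (β * (β + γ - 1) * (γ - β))
        + (β + γ - 1) * u₁ * (1 - β - u₁) * (1 - β) := by ring
    have e1 : 0 ≤ (1 - β - u₁) * (β * γ * γ - (β + γ - 1)) := mul_nonneg (by linarith) hc1
    have e2 : 0 ≤ u₁ * (β * (β + γ - 1) * (γ - β)) := mul_nonneg hu10 hc2
    have e3 : 0 ≤ (β + γ - 1) * u₁ * (1 - β - u₁) * (1 - β) := by
      apply mul_nonneg; apply mul_nonneg; apply mul_nonneg
      · linarith
      all_goals linarith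
    exact nonneg_of_mul_pos (show (0:ℝ) < 1 - β by linarith) (by rw [hid5]; linarith)
  have h3 : 0 ≤ (1 - u₂) * (γ * (γ - u₁) * (β + γ - 1) - (β + γ - 1) * (γ - u₁) ^ 2) :=
    mul_nonneg (by linarith) hP5γ
  have h4 : 0 ≤ (u₂ - γ) * (γ * (γ - u₁) * β - (β + γ - 1) * (1 - u₁) ^ 2) :=
    mul_nonneg (by linarith) hP51
  have h5 : 0 ≤ (β + γ - 1) * (u₂ - γ) * (1 - u₂) * (1 - γ) := by
    apply mul_nonneg; apply mul_nonneg; apply mul_nonneg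
    · linarith
    all_goals linarith
  have hid : (1 - γ) * (γ * ((γ - u₁) * (β + u₂ - 1)) - (β + γ - 1) * (u₂ - u₁) ^ 2)
      = (1 - u₂) * (γ * (γ - u₁) * (β + γ - 1) - (β + γ - 1) * (γ - u₁) ^ 2)
      + (u₂ - γ) * (γ * (γ - u₁) * β - (β + γ - 1) * (1 - u₁) ^ 2)
      + (β + γ - 1) * (u₂ - γ) * (1 - u₂) * (1 - γ) := by ring
  have := nonneg_of_mul_pos (show (0:ℝ) < 1 - γ by linarith) (by rw [hid]; linarith :
    0 ≤ (1 - γ) * (γ * ((γ - u₁) * (β + u₂ - 1)) - (β + γ - 1) * (u₂ - u₁) ^ 2))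
  linarith

/-- F : K1 branch, high-u₁ zone -/
private lemma bstt_F (β γ u₁ u₂ : ℝ) (hb0 : 0 ≤ β) (hbγ : β ≤ γ) (hbg : 1 < β + γ)
    (hu10 : 0 ≤ u₁) (hu1γ : u₁ ≤ γ) (hγu2 : γ < u₂) (hu21 : u₂ ≤ 1)
    (hW : 1 ≤ β + u₁) (hbr : β * γ * γ ≤ β + γ - 1) :
    β * γ * (u₂ - u₁) * u₁ ≤ (β + u₁ - 1) * (u₂ - γ) + u₁ * (γ - u₁) := by
  have hγ0 : (0:ℝ) < γ := by linarith
  have hγlt1 : γ < 1 := by linarith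
  have hbγ1 : β * γ ≤ 1 := by nlinarith
  have hFγ : 0 ≤ u₁ * (γ - u₁) - β * γ * (γ - u₁) * u₁ := by
    nlinarith [mul_nonneg (mul_nonneg hu10 (sub_nonneg.2 hu1γ)) (sub_nonneg.2 hbγ1)]
  have hF1 : 0 ≤ (β + u₁ - 1) * (1 - γ) + u₁ * (γ - u₁) - β * γ * (1 - u₁) * u₁ := by
    have hFa : 0 ≤ (1 - β) * (β + γ - 1 - β * β * γ) := by
      have hX : 0 ≤ β + γ - 1 - β * β * γ := by
        nlinarith [mul_nonneg (mul_nonneg hb0 hγ0.le) (sub_nonneg.2 hbγ)]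
      exact mul_nonneg (by linarith) hX
    have hFb : 0 ≤ (1 - γ) * (β + γ - 1 - β * γ * γ) := by nlinarith
    have e1 : 0 ≤ (γ - u₁) * ((1 - β) * (β + γ - 1 - β * β * γ)) :=
      mul_nonneg (by linarith) hFa
    have e2 : 0 ≤ (u₁ - (1 - β)) * ((1 - γ) * (β + γ - 1 - β * γ * γ)) :=
      mul_nonneg (by linarith) hFb
    have e3 : 0 ≤ (1 - β * γ) * (γ - u₁) * (u₁ - (1 - β)) * (β + γ - 1) := by
      apply mul_nonneg; apply mul_nonneg; apply mul_nonneg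
      · linarith
      all_goals linarith
    have hid2 : (β + γ - 1) * ((β + u₁ - 1) * (1 - γ) + u₁ * (γ - u₁) - β * γ * (1 - u₁) * u₁)
        = (γ - u₁) * ((1 - β) * (β + γ - 1 - β * β * γ))
        + (u₁ - (1 - β)) * ((1 - γ) * (β + γ - 1 - β * γ * γ))
        + (1 - β * γ) * (γ - u₁) * (u₁ - (1 - β)) * (β + γ - 1) := by ring
    exact nonneg_of_mul_pos (show (0:ℝ) < β + γ - 1 by linarith) (by rw [hid2]; linarith)
  have h3 : 0 ≤ (1 - u₂) * (u₁ * (γ - u₁) - β * γ * (γ - u₁) * u₁) := mul_nonneg (by linarith) hFγ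
  have h4 : 0 ≤ (u₂ - γ) * ((β + u₁ - 1) * (1 - γ) + u₁ * (γ - u₁) - β * γ * (1 - u₁) * u₁) :=
    mul_nonneg (by linarith) hF1
  have hid3 : (1 - γ) * ((β + u₁ - 1) * (u₂ - γ) + u₁ * (γ - u₁) - β * γ * (u₂ - u₁) * u₁)
      = (1 - u₂) * (u₁ * (γ - u₁) - β * γ * (γ - u₁) * u₁)
      + (u₂ - γ) * ((β + u₁ - 1) * (1 - γ) + u₁ * (γ - u₁) - β * γ * (1 - u₁) * u₁) := by ring
  have := nonneg_of_mul_pos (show (0:ℝ) < 1 - γ by linarith) (by rw [hid3]; linarith :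
    0 ≤ (1 - γ) * ((β + u₁ - 1) * (u₂ - γ) + u₁ * (γ - u₁) - β * γ * (u₂ - u₁) * u₁))
  linarith

/-- G : K2 branch, high-u₁ zone -/
private lemma bstt_G (β γ u₁ u₂ : ℝ) (hb0 : 0 ≤ β) (hbγ : β ≤ γ) (hbg : 1 < β + γ)
    (hu10 : 0 ≤ u₁) (hu1γ : u₁ ≤ γ) (hγu2 : γ < u₂) (hu21 : u₂ ≤ 1)
    (hW : 1 ≤ β + u₁) (hbr : β + γ - 1 ≤ β * γ * γ) :
    (β + γ - 1) * (u₂ - u₁) * u₁ ≤ γ * ((β + u₁ - 1) * (u₂ - γ) + u₁ * (γ - u₁)) := by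
  have hγ0 : (0:ℝ) < γ := by linarith
  have hγlt1 : γ < 1 := by linarith
  have hGγ : 0 ≤ γ * (u₁ * (γ - u₁)) - (β + γ - 1) * (γ - u₁) * u₁ := by
    nlinarith [mul_nonneg (mul_nonneg hu10 (sub_nonneg.2 hu1γ)) (sub_nonneg.2 (show β ≤ 1 by linarith))]
  have hG1 : 0 ≤ γ * ((β + u₁ - 1) * (1 - γ) + u₁ * (γ - u₁)) - (β + γ - 1) * (1 - u₁) * u₁ := by
    nlinarith [mul_nonneg (sub_nonneg.2 hW) (sub_nonneg.2 hγlt1.le),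
      mul_nonneg hu10 (sub_nonneg.2 hu1γ), sq_nonneg (γ - u₁), sq_nonneg (β + u₁ - 1),
      mul_nonneg (sub_nonneg.2 hbγ) hu10, mul_nonneg (sub_nonneg.2 hu1γ) (sub_nonneg.2 hγlt1.le),
      mul_nonneg (mul_nonneg hu10 hu10) (sub_nonneg.2 hγlt1.le)]
  have h3 : 0 ≤ (1 - u₂) * (γ * (u₁ * (γ - u₁)) - (β + γ - 1) * (γ - u₁) * u₁) :=
    mul_nonneg (by linarith) hGγ
  have h4 : 0 ≤ (u₂ - γ) * (γ * ((β + u₁ - 1) * (1 - γ) + u₁ * (γ - u₁)) - (β + γ - 1) * (1 - u₁) * u₁) :=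
    mul_nonneg (by linarith) hG1
  have hid3 : (1 - γ) * (γ * ((β + u₁ - 1) * (u₂ - γ) + u₁ * (γ - u₁)) - (β + γ - 1) * (u₂ - u₁) * u₁)
      = (1 - u₂) * (γ * (u₁ * (γ - u₁)) - (β + γ - 1) * (γ - u₁) * u₁)
      + (u₂ - γ) * (γ * ((β + u₁ - 1) * (1 - γ) + u₁ * (γ - u₁)) - (β + γ - 1) * (1 - u₁) * u₁) := by ring
  have := nonneg_of_mul_pos (show (0:ℝ) < 1 - γ by linarith) (by rw [hid3]; linarith :
    0 ≤ (1 - γ) * (γ * ((β + u₁ - 1) * (u₂ - γ) + u₁ * (γ - u₁)) - (β + γ - 1) * (u₂ - u₁) * u₁))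
  linarith

/-- Key two-point inequality (Lemma K). -/
private lemma bstt_pair (β γ u₁ u₂ t A B : ℝ)
    (hb0 : 0 ≤ β) (hbγ : β ≤ γ) (hγ1 : γ ≤ 1) (hbg : 1 < β + γ)
    (hu10 : 0 ≤ u₁) (hu1γ : u₁ ≤ γ) (hγu2 : γ ≤ u₂) (hu21 : u₂ ≤ 1)
    (ht0 : 0 ≤ t) (ht1 : t ≤ 1) (hmean : t * u₁ + (1 - t) * u₂ = γ)
    (hA0 : 0 ≤ A) (hAB : A ≤ B) (hB1 : B ≤ 1)
    (hM : β + u₂ - 1 ≤ A * u₁ + B * (u₂ - u₁)) :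
    min (β * γ) ((β + γ - 1) / γ) ≤ t * A + (1 - t) * B := by
  have hγ0 : (0:ℝ) < γ := by linarith
  have hSA : A ≤ t * A + (1 - t) * B := by
    nlinarith [mul_nonneg (sub_nonneg.2 ht1) (sub_nonneg.2 hAB)]
  rcases le_or_gt (β + γ - 1) (γ * A) with hI | hII
  · refine le_trans (min_le_right _ _) (le_trans ?_ hSA)
    rw [div_le_iff₀ hγ0]; linarith
  · rcases eq_or_lt_of_le hγu2 with heq | hu2γ
    · -- u₂ = γ
      have hMγ : β + γ - 1 ≤ A * u₁ + B * (γ - u₁) := by rw [← heq] at hM; exact hM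
      have h0 : t * (γ - u₁) = 0 := by
        have h := hmean; rw [← heq] at h; linear_combination -h
      rcases mul_eq_zero.1 h0 with ht | hu
      · have hBS : t * A + (1 - t) * B = B := by rw [ht]; ring
        refine le_trans (min_le_right _ _) ?_
        rw [div_le_iff₀ hγ0, hBS]
        nlinarith [mul_le_mul_of_nonneg_right hAB hu10]
      · exfalso
        have hu1 : u₁ = γ := by linarith
        rw [hu1] at hMγ; nlinarith
    · -- γ < u₂
      have hu1γ' : u₁ < γ := by
        rcases eq_or_lt_of_le hu1γ with h | h
        · exfalso
          have ht' : (1 - t) * (u₂ - γ) = 0 := by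
            have hm := hmean; rw [h] at hm; linear_combination hm
          rcases mul_eq_zero.1 ht' with h1 | h2
          · have hBle : B * (u₂ - u₁) ≤ u₂ - u₁ := by
              nlinarith [mul_nonneg (sub_nonneg.2 hB1) (by linarith : (0:ℝ) ≤ u₂ - u₁)]
            rw [h] at hM hBle; nlinarith
          · linarith
        · exact h
      have hD : 0 < u₂ - u₁ := by linarith
      have htD : t * (u₂ - u₁) = u₂ - γ := by linear_combination -hmean
      have h1tD : (1 - t) * (u₂ - u₁) = γ - u₁ := by linear_combination hmean
      have hSD : (t * A + (1 - t) * B) * (u₂ - u₁) = A * (u₂ - γ) + B * (γ - u₁) := by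
        linear_combination A * htD + B * h1tD
      have hBD : B * (u₂ - u₁) ≤ u₂ - u₁ := by
        nlinarith [mul_nonneg (sub_nonneg.2 hB1) hD.le]
      rcases le_total (β * γ * γ) (β + γ - 1) with hbr | hbr
      · -- prove β*γ ≤ S
        have key : β * γ * (u₂ - u₁) ≤ A * (u₂ - γ) + B * (γ - u₁) := by
          rcases lt_or_ge ((u₂ - γ) * (u₂ - u₁) - u₁ * (γ - u₁)) 0 with hT | hT
          · -- T < 0 : u₂ * L ≥ D * (Au₁+BD) ≥ D * c ≥ D * βγu₂
            have hBA : 0 ≤ (B - A) * (-((u₂ - γ) * (u₂ - u₁) - u₁ * (γ - u₁))) :=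
              mul_nonneg (by linarith) (by linarith)
            have hc : β * γ * u₂ ≤ β + u₂ - 1 := by
              nlinarith [mul_nonneg (sub_nonneg.2 (show β * γ ≤ 1 by nlinarith)) (sub_nonneg.2 hγu2)]
            have h3 : (u₂ - u₁) * (β + u₂ - 1) ≤ (u₂ - u₁) * (A * u₁ + B * (u₂ - u₁)) :=
              mul_le_mul_of_nonneg_left hM hD.le
            have h6 : (u₂ - u₁) * (β * γ * u₂) ≤ (u₂ - u₁) * (β + u₂ - 1) :=
              mul_le_mul_of_nonneg_left hc hD.le
            have hid : u₂ * (A * (u₂ - γ) + B * (γ - u₁)) - (u₂ - u₁) * (A * u₁ + B * (u₂ - u₁))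
                = (B - A) * (-((u₂ - γ) * (u₂ - u₁) - u₁ * (γ - u₁))) := by ring
            have hu20 : 0 < u₂ := by linarith
            have : (β * γ * (u₂ - u₁)) * u₂ ≤ (A * (u₂ - γ) + B * (γ - u₁)) * u₂ := by
              nlinarith
            exact le_of_mul_right hu20 this
          · have hDL2 : A * ((u₂ - γ) * (u₂ - u₁) - u₁ * (γ - u₁)) + (γ - u₁) * (β + u₂ - 1)
                ≤ (u₂ - u₁) * (A * (u₂ - γ) + B * (γ - u₁)) := by
              have h9 := mul_le_mul_of_nonneg_left hM (by linarith : (0:ℝ) ≤ γ - u₁)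
              nlinarith
            rcases le_total (β + u₁) 1 with hW | hW
            · have hB2 := bstt_B2 β γ u₁ u₂ hb0 hbγ hbg hu10 hu1γ'.le hu2γ hu21 hW hbr
              have hAT : 0 ≤ A * ((u₂ - γ) * (u₂ - u₁) - u₁ * (γ - u₁)) := mul_nonneg hA0 hT
              have : (β * γ * (u₂ - u₁)) * (u₂ - u₁) ≤ (A * (u₂ - γ) + B * (γ - u₁)) * (u₂ - u₁) := by
                nlinarith [sq_nonneg (u₂ - u₁)]
              exact le_of_mul_right hD this
            · have hu1pos : 0 < u₁ := by linarith
              have hAmin : β + u₁ - 1 ≤ A * u₁ := by linarith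
              have hATb : (β + u₁ - 1) * ((u₂ - γ) * (u₂ - u₁) - u₁ * (γ - u₁))
                  ≤ (A * u₁) * ((u₂ - γ) * (u₂ - u₁) - u₁ * (γ - u₁)) :=
                mul_le_mul_of_nonneg_right hAmin hT
              have hF := bstt_F β γ u₁ u₂ hb0 hbγ hbg hu10 hu1γ'.le hu2γ hu21 hW hbr
              have h5 := mul_le_mul_of_nonneg_left hDL2 hu1pos.le
              have h8 := mul_le_mul_of_nonneg_left hF hD.le
              have : (β * γ * (u₂ - u₁)) * (u₁ * (u₂ - u₁)) ≤ (A * (u₂ - γ) + B * (γ - u₁)) * (u₁ * (u₂ - u₁)) := by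
                nlinarith
              exact le_of_mul_right (mul_pos hu1pos hD) this
        refine le_trans (min_le_left _ _) ?_
        have h10 : β * γ * (u₂ - u₁) ≤ (t * A + (1 - t) * B) * (u₂ - u₁) := by rw [hSD]; exact key
        exact le_of_mul_right hD h10
      · -- prove (β+γ-1)/γ ≤ S
        have key : (β + γ - 1) * (u₂ - u₁) ≤ γ * (A * (u₂ - γ) + B * (γ - u₁)) := by
          rcases lt_or_ge ((u₂ - γ) * (u₂ - u₁) - u₁ * (γ - u₁)) 0 with hT | hT
          · have hBA : 0 ≤ (B - A) * (-((u₂ - γ) * (u₂ - u₁) - u₁ * (γ - u₁))) :=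
              mul_nonneg (by linarith) (by linarith)
            have hc : (β + γ - 1) * u₂ ≤ γ * (β + u₂ - 1) := by
              nlinarith [mul_nonneg (sub_nonneg.2 (show β ≤ 1 by linarith)) (sub_nonneg.2 hγu2)]
            have h3 : (u₂ - u₁) * (β + u₂ - 1) ≤ (u₂ - u₁) * (A * u₁ + B * (u₂ - u₁)) :=
              mul_le_mul_of_nonneg_left hM hD.le
            have h6 : (u₂ - u₁) * ((β + γ - 1) * u₂) ≤ (u₂ - u₁) * (γ * (β + u₂ - 1)) :=
              mul_le_mul_of_nonneg_left hc hD.le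
            have hid : u₂ * (A * (u₂ - γ) + B * (γ - u₁)) - (u₂ - u₁) * (A * u₁ + B * (u₂ - u₁))
                = (B - A) * (-((u₂ - γ) * (u₂ - u₁) - u₁ * (γ - u₁))) := by ring
            have hu20 : 0 < u₂ := by linarith
            have h7 : (u₂ - u₁) * (β + u₂ - 1) ≤ u₂ * (A * (u₂ - γ) + B * (γ - u₁)) := by
              linarith [hid, hBA, h3]
            have h8 := mul_le_mul_of_nonneg_left h7 hγ0.le
            have : ((β + γ - 1) * (u₂ - u₁)) * u₂ ≤ (γ * (A * (u₂ - γ) + B * (γ - u₁))) * u₂ := by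
              nlinarith [h6, h8]
            exact le_of_mul_right hu20 this
          · have hDL2 : A * ((u₂ - γ) * (u₂ - u₁) - u₁ * (γ - u₁)) + (γ - u₁) * (β + u₂ - 1)
                ≤ (u₂ - u₁) * (A * (u₂ - γ) + B * (γ - u₁)) := by
              have h9 := mul_le_mul_of_nonneg_left hM (by linarith : (0:ℝ) ≤ γ - u₁)
              nlinarith
            rcases le_total (β + u₁) 1 with hW | hW
            · have hB5 := bstt_B5 β γ u₁ u₂ hb0 hbγ hbg hu10 hu1γ'.le hu2γ hu21 hW hbr
              have hAT : 0 ≤ A * ((u₂ - γ) * (u₂ - u₁) - u₁ * (γ - u₁)) := mul_nonneg hA0 hT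
              have h13 := mul_le_mul_of_nonneg_left hDL2 hγ0.le
              have : ((β + γ - 1) * (u₂ - u₁)) * (u₂ - u₁) ≤ (γ * (A * (u₂ - γ) + B * (γ - u₁))) * (u₂ - u₁) := by
                nlinarith [mul_nonneg hγ0.le hAT]
              exact le_of_mul_right hD this
            · have hu1pos : 0 < u₁ := by linarith
              have hAmin : β + u₁ - 1 ≤ A * u₁ := by linarith
              have hATb : (β + u₁ - 1) * ((u₂ - γ) * (u₂ - u₁) - u₁ * (γ - u₁))
                  ≤ (A * u₁) * ((u₂ - γ) * (u₂ - u₁) - u₁ * (γ - u₁)) :=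
                mul_le_mul_of_nonneg_right hAmin hT
              have hG := bstt_G β γ u₁ u₂ hb0 hbγ hbg hu10 hu1γ'.le hu2γ hu21 hW hbr
              have h5 := mul_le_mul_of_nonneg_left hDL2 (mul_nonneg hγ0.le hu1pos.le)
              have h8 := mul_le_mul_of_nonneg_left hG hD.le
              have : ((β + γ - 1) * (u₂ - u₁)) * (u₁ * (u₂ - u₁)) ≤ (γ * (A * (u₂ - γ) + B * (γ - u₁))) * (u₁ * (u₂ - u₁)) := by
                nlinarith
              exact le_of_mul_right (mul_pos hu1pos hD) this
        refine le_trans (min_le_right _ _) ?_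
        rw [div_le_iff₀ hγ0]
        rw [← hSD] at key
        have h10 : (β + γ - 1) * (u₂ - u₁) ≤ ((t * A + (1 - t) * B) * γ) * (u₂ - u₁) := by
          nlinarith [key]
        exact le_of_mul_right hD h10






private lemma bstt_step {I : Type*} [DecidableEq I] (W : ℝ → ℝ) (γ m lam t : ℝ)
    (s : Finset I) (v x : I → ℝ) (i k : I) (hi : i ∈ s) (hk : k ∈ s) (hik : i ≠ k)
    (hvi : v i = lam * t) (hvk : lam * (1 - t) ≤ v k)
    (IH : ∀ v' : I → ℝ, (∀ j ∈ s.erase i, 0 ≤ v' j) →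
      ((∑ j ∈ s.erase i, v' j) * γ = ∑ j ∈ s.erase i, v' j * x j) →
      m * (∑ j ∈ s.erase i, v' j) ≤ ∑ j ∈ s.erase i, v' j * W (x j))
    (hpair : m ≤ t * W (x i) + (1 - t) * W (x k))
    (hv0 : ∀ j ∈ s, 0 ≤ v j) (hlam : 0 ≤ lam) (ht0 : 0 ≤ t) (ht1 : t ≤ 1)
    (hmean : (∑ j ∈ s, v j) * γ = ∑ j ∈ s, v j * x j)
    (hγmean : t * x i + (1 - t) * x k = γ) :
    m * (∑ j ∈ s, v j) ≤ ∑ j ∈ s, v j * W (x j) := by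
  classical
  have hki : k ∈ s.erase i := Finset.mem_erase.2 ⟨fun h => hik h.symm, hk⟩
  set v' : I → ℝ := fun j => if j = k then v k - lam * (1 - t) else v j with hv'
  have hsplit : ∀ f : I → ℝ, ∑ j ∈ s, f j = f i + ∑ j ∈ s.erase i, f j :=
    fun f => (Finset.add_sum_erase s f hi).symm
  have hsplit2 : ∀ f : I → ℝ, ∑ j ∈ s.erase i, f j = f k + ∑ j ∈ (s.erase i).erase k, f j :=
    fun f => (Finset.add_sum_erase _ f hki).symm
  have hrest : ∀ g : I → ℝ, ∑ j ∈ (s.erase i).erase k, v' j * g j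
      = ∑ j ∈ (s.erase i).erase k, v j * g j := by
    intro g
    refine Finset.sum_congr rfl fun j hj => ?_
    have hjk : j ≠ k := (Finset.mem_erase.1 hj).1
    simp [hv', hjk]
  have hv'sum : ∀ g : I → ℝ, ∑ j ∈ s.erase i, v' j * g j
      = (∑ j ∈ s.erase i, v j * g j) - lam * (1 - t) * g k := by
    intro g
    rw [hsplit2 (fun j => v' j * g j), hsplit2 (fun j => v j * g j), hrest g]
    simp [hv']
    ring
  have hv'one : ∑ j ∈ s.erase i, v' j = (∑ j ∈ s.erase i, v j) - lam * (1 - t) := by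
    have h := hv'sum (fun _ => 1)
    simpa using h
  have hv'0 : ∀ j ∈ s.erase i, 0 ≤ v' j := by
    intro j hj
    by_cases hjk : j = k
    · simp [hv', hjk]; linarith
    · simp [hv', hjk]; exact hv0 j (Finset.mem_of_mem_erase hj)
  have hv'mean : (∑ j ∈ s.erase i, v' j) * γ = ∑ j ∈ s.erase i, v' j * x j := by
    rw [hv'one, hv'sum x]
    have h1 := hsplit (fun j => v j)
    have h2 := hsplit (fun j => v j * x j)
    rw [h1, h2, hvi] at hmean
    linear_combination hmean + lam * hγmean
  have hIH := IH v' hv'0 hv'mean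
  have h1 := hsplit (fun j => v j)
  have h2 := hsplit (fun j => v j * W (x j))
  have h3 := hv'sum (fun j => W (x j))
  have h4 := mul_le_mul_of_nonneg_left hpair hlam
  rw [hv'one] at hIH
  rw [h1, h2, hvi]
  nlinarith [hIH, h3, h4]

private lemma bstt_mix {I : Type*} [DecidableEq I] (W : ℝ → ℝ) (γ m : ℝ)
    (hγ0 : 0 ≤ γ) (hγ1 : γ ≤ 1)
    (hWm : ∀ a b, 0 ≤ a → a ≤ b → b ≤ 1 → W a ≤ W b)
    (hWpair : ∀ u₁ u₂ t, 0 ≤ u₁ → u₁ ≤ γ → γ ≤ u₂ → u₂ ≤ 1 → 0 ≤ t → t ≤ 1 →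
      t * u₁ + (1 - t) * u₂ = γ → m ≤ t * W u₁ + (1 - t) * W u₂) :
    ∀ (n : ℕ) (s : Finset I) (v x : I → ℝ), s.card ≤ n →
      (∀ i ∈ s, 0 ≤ v i) → (∀ i ∈ s, 0 ≤ x i) → (∀ i ∈ s, x i ≤ 1) →
      ((∑ i ∈ s, v i) * γ = ∑ i ∈ s, v i * x i) →
      m * (∑ i ∈ s, v i) ≤ ∑ i ∈ s, v i * W (x i) := by
  have hWγ : m ≤ W γ := by
    have := hWpair γ γ 1 hγ0 le_rfl le_rfl hγ1 zero_le_one le_rfl (by ring)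
    linarith
  intro n
  induction n with
  | zero =>
    intro s v x hcard _ _ _ _
    have : s = ∅ := Finset.card_eq_zero.1 (Nat.le_zero.1 hcard)
    subst this; simp
  | succ n IH =>
    intro s v x hcard hv0 hx0 hx1 hmean
    by_cases hzero : ∃ i ∈ s, v i = 0
    · obtain ⟨i, hi, hvi⟩ := hzero
      have hcard' : (s.erase i).card ≤ n := by
        have := Finset.card_erase_of_mem hi
        omega
      have e1 : ∑ j ∈ s.erase i, v j = ∑ j ∈ s, v j := by
        apply Finset.sum_erase; exact hvi
      have e2 : ∑ j ∈ s.erase i, v j * x j = ∑ j ∈ s, v j * x j := by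
        apply Finset.sum_erase; rw [hvi]; ring
      have e3 : ∑ j ∈ s.erase i, v j * W (x j) = ∑ j ∈ s, v j * W (x j) := by
        apply Finset.sum_erase; rw [hvi]; ring
      have := IH (s.erase i) v x hcard'
        (fun j hj => hv0 j (Finset.mem_of_mem_erase hj))
        (fun j hj => hx0 j (Finset.mem_of_mem_erase hj))
        (fun j hj => hx1 j (Finset.mem_of_mem_erase hj))
        (by rw [e1, e2]; exact hmean)
      rw [e1, e3] at this; linarith [this]
    · push_neg at hzero
      have hvpos : ∀ i ∈ s, 0 < v i := fun i hi => lt_of_le_of_ne (hv0 i hi) (Ne.symm (hzero i hi))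
      by_cases hlow : ∃ i ∈ s, x i < γ
      · by_cases hhigh : ∃ k ∈ s, γ < x k
        · obtain ⟨i, hi, hxi⟩ := hlow
          obtain ⟨k, hk, hxk⟩ := hhigh
          have hik : i ≠ k := fun h => absurd (h ▸ hxi) (not_lt.2 (le_of_lt hxk))
          have hd : 0 < x k - x i := by linarith
          set t : ℝ := (x k - γ) / (x k - x i) with hT
          have ht0 : 0 < t := div_pos (by linarith) hd
          have ht1 : t < 1 := by
            rw [hT, div_lt_one hd]; linarith
          have hγmean : t * x i + (1 - t) * x k = γ := by
            rw [hT]; field_simp; ring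
          have hpair : m ≤ t * W (x i) + (1 - t) * W (x k) :=
            hWpair (x i) (x k) t (hx0 i hi) hxi.le hxk.le (hx1 k hk) ht0.le ht1.le hγmean
          have hcard' : (s.erase i).card ≤ n := by
            have := Finset.card_erase_of_mem hi; omega
          have hcard'' : (s.erase k).card ≤ n := by
            have := Finset.card_erase_of_mem hk; omega
          rcases le_total (v i / t) (v k / (1 - t)) with hmin | hmin
          · -- lam = v i / t, i exhausted
            set lam : ℝ := v i / t with hlam
            have hvit : v i = lam * t := by
              have htne : t ≠ 0 := ne_of_gt ht0
              rw [hlam]; field_simp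
            have hvkt : lam * (1 - t) ≤ v k := by
              rw [hlam]
              rw [div_le_div_iff₀ ht0 (by linarith)] at hmin
              nlinarith
            exact bstt_step W γ m lam t s v x i k hi hk hik hvit hvkt
              (fun v' hv'0 hv'mean => IH (s.erase i) v' x hcard' hv'0
                (fun j hj => hx0 j (Finset.mem_of_mem_erase hj))
                (fun j hj => hx1 j (Finset.mem_of_mem_erase hj)) hv'mean)
              hpair hv0 (le_of_lt (div_pos (hvpos i hi) ht0)) ht0.le ht1.le hmean hγmean
          · -- lam = v k / (1 - t), k exhausted
            set lam : ℝ := v k / (1 - t) with hlam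
            have hvkt : v k = lam * (1 - t) := by
              have h1t : (1:ℝ) - t ≠ 0 := by linarith
              rw [hlam]; field_simp
            have hvit : lam * (1 - (1 - t)) ≤ v i := by
              rw [hlam]
              rw [div_le_div_iff₀ (by linarith : (0:ℝ) < 1 - t) ht0] at hmin
              nlinarith
            have hγmean' : (1 - t) * x k + (1 - (1 - t)) * x i = γ := by linarith [hγmean]
            have hpair' : m ≤ (1 - t) * W (x k) + (1 - (1 - t)) * W (x i) := by linarith [hpair]
            exact bstt_step W γ m lam (1 - t) s v x k i hk hi hik.symm hvkt hvit
              (fun v' hv'0 hv'mean => IH (s.erase k) v' x hcard'' hv'0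
                (fun j hj => hx0 j (Finset.mem_of_mem_erase hj))
                (fun j hj => hx1 j (Finset.mem_of_mem_erase hj)) hv'mean)
              hpair' hv0 (le_of_lt (div_pos (hvpos k hk) (by linarith))) (by linarith) (by linarith)
              hmean hγmean'
        · -- all x ≤ γ : each x i with positive weight equals γ
          push_neg at hhigh
          have hsum0 : ∑ i ∈ s, v i * (γ - x i) = 0 := by
            have : ∑ i ∈ s, v i * (γ - x i) = (∑ i ∈ s, v i) * γ - ∑ i ∈ s, v i * x i := by
              rw [Finset.sum_mul]; rw [← Finset.sum_sub_distrib]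
              apply Finset.sum_congr rfl; intro j hj; ring
            rw [this, hmean]; ring
          have hterm : ∀ i ∈ s, v i * (γ - x i) = 0 := by
            intro i hi
            have := (Finset.sum_eq_zero_iff_of_nonneg
              (fun j hj => mul_nonneg (hv0 j hj) (by linarith [hhigh j hj]))).1 hsum0
            exact this i hi
          have hxγ : ∀ i ∈ s, x i = γ := by
            intro i hi
            rcases mul_eq_zero.1 (hterm i hi) with h | h
            · exact absurd h (hzero i hi)
            · linarith
          calc m * ∑ i ∈ s, v i = ∑ i ∈ s, v i * m := by
                rw [Finset.mul_sum]; exact Finset.sum_congr rfl fun i _ => mul_comm m (v i)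
          _ ≤ ∑ i ∈ s, v i * W (x i) := by
              apply Finset.sum_le_sum
              intro i hi
              apply mul_le_mul_of_nonneg_left _ (hv0 i hi)
              rw [hxγ i hi]; exact hWγ
      · -- all x ≥ γ
        push_neg at hlow
        calc m * ∑ i ∈ s, v i = ∑ i ∈ s, v i * m := by
              rw [Finset.mul_sum]; exact Finset.sum_congr rfl fun i _ => mul_comm m (v i)
        _ ≤ ∑ i ∈ s, v i * W (x i) := by
            apply Finset.sum_le_sum
            intro i hi
            apply mul_le_mul_of_nonneg_left _ (hv0 i hi)
            exact le_trans hWγ (hWm γ (x i) hγ0 (hlow i hi) (hx1 i hi))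






private lemma bstt_prob {I J : Type*} [Fintype I] [Fintype J] [DecidableEq I]
    (v : I → ℝ) (w : J → ℝ) (x : I → ℝ) (y : J → ℝ)
    (hv0 : ∀ i, 0 ≤ v i) (hw0 : ∀ j, 0 ≤ w j)
    (hv1 : ∑ i, v i = 1) (hw1 : ∑ j, w j = 1)
    (hx0 : ∀ i, 0 ≤ x i) (hx1 : ∀ i, x i ≤ 1) (hy0 : ∀ j, 0 ≤ y j) (hy1 : ∀ j, y j ≤ 1)
    (β γ : ℝ) (hβ : ∑ j, w j * y j = β) (hγ : ∑ i, v i * x i = γ)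
    (hbγ : β ≤ γ) (hbg : 1 < β + γ)
    [∀ i j, Decidable (1 < x i + y j)] [∀ u j, Decidable ((1:ℝ) - u < y j)] :
    min (β * γ) ((β + γ - 1) / γ) ≤ ∑ i, ∑ j, (if 1 < x i + y j then v i * w j else 0) := by
  have hb0 : 0 ≤ β := by
    rw [← hβ]; exact Finset.sum_nonneg fun j _ => mul_nonneg (hw0 j) (hy0 j)
  have hγ1 : γ ≤ 1 := by
    rw [← hγ, ← hv1]
    exact Finset.sum_le_sum fun i _ => by nlinarith [hv0 i, hx1 i]
  have hγ0 : 0 ≤ γ := by linarith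
  set W : ℝ → ℝ := fun u => ∑ j, (if 1 - u < y j then w j else 0) with hWdef
  have hW0 : ∀ u, 0 ≤ W u := by
    intro u; apply Finset.sum_nonneg; intro j _
    split_ifs; exacts [hw0 j, le_refl 0]
  have hW1 : ∀ u, W u ≤ 1 := by
    intro u; rw [← hw1]
    apply Finset.sum_le_sum; intro j _
    split_ifs; exacts [le_refl _, hw0 j]
  have hWm : ∀ a b, 0 ≤ a → a ≤ b → b ≤ 1 → W a ≤ W b := by
    intro a b _ hab _
    apply Finset.sum_le_sum; intro j _
    split_ifs with h1 h2 h2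
    · exact le_refl _
    · exact absurd (by linarith : 1 - b < y j) h2
    · exact hw0 j
    · exact le_refl _
  have hMarkov : ∀ u₁ u₂ : ℝ, u₁ ≤ u₂ → u₂ ≤ 1 →
      β + u₂ - 1 ≤ W u₁ * u₁ + W u₂ * (u₂ - u₁) := by
    intro u₁ u₂ h12 h21
    have key : ∀ j, w j * y j ≤ (if 1 - u₁ < y j then w j else 0) * u₁
        + (if 1 - u₂ < y j then w j else 0) * (u₂ - u₁) + w j * (1 - u₂) := by
      intro j
      by_cases c1 : 1 - u₁ < y j
      · have c2 : 1 - u₂ < y j := by linarith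
        simp only [c1, c2, if_pos]
        nlinarith [mul_nonneg (hw0 j) (sub_nonneg.2 (hy1 j))]
      · by_cases c2 : 1 - u₂ < y j
        · simp only [c1, c2, if_pos, if_neg, not_false_iff]
          push_neg at c1
          nlinarith [mul_nonneg (hw0 j) (by linarith : (0:ℝ) ≤ 1 - u₁ - y j)]
        · simp only [c1, c2, if_neg, not_false_iff]
          push_neg at c2
          nlinarith [mul_nonneg (hw0 j) (by linarith : (0:ℝ) ≤ 1 - u₂ - y j)]
    have hsum := Finset.sum_le_sum (fun j (_ : j ∈ Finset.univ) => key j)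
    rw [hβ] at hsum
    have e1 : ∑ j, ((if 1 - u₁ < y j then w j else 0) * u₁
        + (if 1 - u₂ < y j then w j else 0) * (u₂ - u₁) + w j * (1 - u₂))
        = W u₁ * u₁ + W u₂ * (u₂ - u₁) + (∑ j, w j) * (1 - u₂) := by
      rw [Finset.sum_add_distrib, Finset.sum_add_distrib, ← Finset.sum_mul, ← Finset.sum_mul,
        ← Finset.sum_mul]
    rw [e1, hw1] at hsum
    linarith
  have hWpair : ∀ u₁ u₂ t, 0 ≤ u₁ → u₁ ≤ γ → γ ≤ u₂ → u₂ ≤ 1 → 0 ≤ t → t ≤ 1 →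
      t * u₁ + (1 - t) * u₂ = γ → min (β * γ) ((β + γ - 1) / γ) ≤ t * W u₁ + (1 - t) * W u₂ := by
    intro u₁ u₂ t h1 h2 h3 h4 h5 h6 h7
    exact bstt_pair β γ u₁ u₂ t (W u₁) (W u₂) hb0 hbγ hγ1 hbg h1 h2 h3 h4 h5 h6 h7
      (hW0 u₁) (hWm u₁ u₂ h1 (le_trans h2 h3) h4) (hW1 u₂)
      (by linarith [hMarkov u₁ u₂ (le_trans h2 h3) h4])
  have hmix := bstt_mix W γ (min (β * γ) ((β + γ - 1) / γ)) hγ0 hγ1 hWm hWpair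
    (Fintype.card I) Finset.univ v x (by simp [Finset.card_univ])
    (fun i _ => hv0 i) (fun i _ => hx0 i) (fun i _ => hx1 i)
    (by rw [hv1, hγ]; ring)
  rw [hv1, mul_one] at hmix
  refine le_trans hmix (le_of_eq ?_)
  apply Finset.sum_congr rfl
  intro i _
  rw [hWdef]
  rw [Finset.mul_sum]
  apply Finset.sum_congr rfl
  intro j _
  rw [mul_ite, mul_zero]
  exact if_congr (by constructor <;> intro h <;> linarith) rfl rfl







/-- Bondy–Shen–Thomassé–Thomassen: if `αβ + γ > 1`, `βγ + α > 1`, `γα + β > 1`, then any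
weighted blow-up of the triangle with densities `d₁₂ ≥ γ`, `d₁₃ ≥ β`, `d₂₃ ≥ α` contains a
transversal triangle. -/
theorem stmt_11 {V₁ V₂ V₃ : Type*} [Fintype V₁] [Fintype V₂] [Fintype V₃]
    (w₁ : V₁ → ℝ) (w₂ : V₂ → ℝ) (w₃ : V₃ → ℝ)
    (hw₁ : ∀ v, 0 ≤ w₁ v) (hw₂ : ∀ v, 0 ≤ w₂ v) (hw₃ : ∀ v, 0 ≤ w₃ v)
    (hs₁ : ∑ v, w₁ v = 1) (hs₂ : ∑ v, w₂ v = 1) (hs₃ : ∑ v, w₃ v = 1)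
    (E₁₂ : V₁ → V₂ → Prop) (E₁₃ : V₁ → V₃ → Prop) (E₂₃ : V₂ → V₃ → Prop)
    (α β γ : ℝ)
    (hα : α ∈ Set.Icc (0 : ℝ) 1) (hβ : β ∈ Set.Icc (0 : ℝ) 1) (hγ : γ ∈ Set.Icc (0 : ℝ) 1)
    (h1 : α * β + γ > 1) (h2 : β * γ + α > 1) (h3 : γ * α + β > 1)
    (hd12 : (∑ u, ∑ v, if E₁₂ u v then w₁ u * w₂ v else 0) ≥ γ)
    (hd13 : (∑ u, ∑ v, if E₁₃ u v then w₁ u * w₃ v else 0) ≥ β)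
    (hd23 : (∑ u, ∑ v, if E₂₃ u v then w₂ u * w₃ v else 0) ≥ α) :
    ∃ (u₁ : V₁) (u₂ : V₂) (u₃ : V₃), E₁₂ u₁ u₂ ∧ E₁₃ u₁ u₃ ∧ E₂₃ u₂ u₃ := by
  by_contra hcon
  push_neg at hcon
  set a : V₂ → ℝ := fun p => ∑ u, if E₁₂ u p then w₁ u else 0 with ha_def
  set b : V₃ → ℝ := fun q => ∑ u, if E₁₃ u q then w₁ u else 0 with hb_def
  have ha0 : ∀ p, 0 ≤ a p := fun p => Finset.sum_nonneg fun u _ => by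
    split_ifs; exacts [hw₁ u, le_refl 0]
  have hb0 : ∀ q, 0 ≤ b q := fun q => Finset.sum_nonneg fun u _ => by
    split_ifs; exacts [hw₁ u, le_refl 0]
  have ha1 : ∀ p, a p ≤ 1 := fun p => by
    rw [ha_def, ← hs₁]
    exact Finset.sum_le_sum fun u _ => by split_ifs; exacts [le_refl _, hw₁ u]
  have hb1 : ∀ q, b q ≤ 1 := fun q => by
    rw [hb_def, ← hs₁]
    exact Finset.sum_le_sum fun u _ => by split_ifs; exacts [le_refl _, hw₁ u]
  set γ' : ℝ := ∑ p, w₂ p * a p with hγ'_def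
  set β' : ℝ := ∑ q, w₃ q * b q with hβ'_def
  have hγγ' : γ ≤ γ' := by
    rw [hγ'_def]
    have : (∑ u, ∑ p, if E₁₂ u p then w₁ u * w₂ p else 0) = ∑ p, w₂ p * a p := by
      rw [Finset.sum_comm]
      apply Finset.sum_congr rfl; intro p _
      rw [ha_def, Finset.mul_sum]
      apply Finset.sum_congr rfl; intro u _
      rw [mul_ite, mul_zero, mul_comm]
    rw [← this]; exact hd12
  have hββ' : β ≤ β' := by
    rw [hβ'_def]
    have : (∑ u, ∑ q, if E₁₃ u q then w₁ u * w₃ q else 0) = ∑ q, w₃ q * b q := by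
      rw [Finset.sum_comm]
      apply Finset.sum_congr rfl; intro q _
      rw [hb_def, Finset.mul_sum]
      apply Finset.sum_congr rfl; intro u _
      rw [mul_ite, mul_zero, mul_comm]
    rw [← this]; exact hd13
  have hγ'1 : γ' ≤ 1 := by
    rw [hγ'_def, ← hs₂]
    exact Finset.sum_le_sum fun p _ => by nlinarith [hw₂ p, ha1 p]
  have hβ'1 : β' ≤ 1 := by
    rw [hβ'_def, ← hs₃]
    exact Finset.sum_le_sum fun q _ => by nlinarith [hw₃ q, hb1 q]
  have hab : ∀ p q, E₂₃ p q → a p + b q ≤ 1 := by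
    intro p q hE
    have key : ∀ u, (if E₁₂ u p then w₁ u else 0) + (if E₁₃ u q then w₁ u else 0) ≤ w₁ u := by
      intro u
      split_ifs with h1' h2' h2'
      · exact absurd hE (hcon u p q h1' h2')
      · linarith [hw₁ u]
      · linarith [hw₁ u]
      · linarith [hw₁ u]
    have : a p + b q = ∑ u, ((if E₁₂ u p then w₁ u else 0) + (if E₁₃ u q then w₁ u else 0)) := by
      rw [Finset.sum_add_distrib]
    rw [this, ← hs₁]
    exact Finset.sum_le_sum fun u _ => key u
  set α' : ℝ := ∑ p, ∑ q, if a p + b q ≤ 1 then w₂ p * w₃ q else 0 with hα'_def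
  set ε : ℝ := ∑ p, ∑ q, if 1 < a p + b q then w₂ p * w₃ q else 0 with hε_def
  have hαα' : α ≤ α' := by
    refine le_trans hd23 ?_
    rw [hα'_def]
    apply Finset.sum_le_sum; intro p _
    apply Finset.sum_le_sum; intro q _
    split_ifs with hE hle hle
    · exact le_refl _
    · exact absurd (hab p q hE) hle
    · exact mul_nonneg (hw₂ p) (hw₃ q)
    · exact le_refl _
  have hε0 : 0 ≤ ε := by
    rw [hε_def]
    apply Finset.sum_nonneg; intro p _
    apply Finset.sum_nonneg; intro q _
    split_ifs; exacts [mul_nonneg (hw₂ p) (hw₃ q), le_refl 0]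
  have hsum1 : α' + ε = 1 := by
    rw [hα'_def, hε_def, ← Finset.sum_add_distrib]
    have : ∀ p, ((∑ q, if a p + b q ≤ 1 then w₂ p * w₃ q else 0)
        + ∑ q, if 1 < a p + b q then w₂ p * w₃ q else 0) = ∑ q, w₂ p * w₃ q := by
      intro p
      rw [← Finset.sum_add_distrib]
      apply Finset.sum_congr rfl; intro q _
      rcases le_or_gt (a p + b q) 1 with h | h
      · rw [if_pos h, if_neg (not_lt.2 h)]; ring
      · rw [if_neg (not_le.2 h), if_pos h]; ring
    rw [Finset.sum_congr rfl fun p _ => this p]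
    have := Finset.sum_mul_sum Finset.univ Finset.univ w₂ w₃
    rw [← this, hs₂, hs₃]; norm_num
  have hα'0 : 0 ≤ α' := le_trans hα.1 hαα'
  have hβ'0 : 0 ≤ β' := le_trans hβ.1 hββ'
  have hγ'0 : 0 ≤ γ' := le_trans hγ.1 hγγ'
  -- primed hypotheses
  have hh1' : α' * β' + γ' > 1 := by
    have : α * β ≤ α' * β' := mul_le_mul hαα' hββ' hβ.1 hα'0
    linarith
  have hh2' : β' * γ' + α' > 1 := by
    have : β * γ ≤ β' * γ' := mul_le_mul hββ' hγγ' hγ.1 hβ'0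
    linarith
  have hh3' : γ' * α' + β' > 1 := by
    have : γ * α ≤ γ' * α' := mul_le_mul hγγ' hαα' hα.1 hγ'0
    linarith
  have hεβ : ε * β' < β' + γ' - 1 := by nlinarith [hh1', hsum1]
  have hεγ : ε * γ' < β' + γ' - 1 := by nlinarith [hh3', hsum1]
  have hεbg : ε < β' * γ' := by nlinarith [hh2', hsum1]
  have hbg' : 1 < β' + γ' := by nlinarith [mul_nonneg hε0 hβ'0]
  rcases le_total β' γ' with hord | hord
  · have hγ'pos : 0 < γ' := by linarith
    have hmin := bstt_prob w₂ w₃ a b hw₂ hw₃ hs₂ hs₃ ha0 ha1 hb0 hb1 β' γ'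
      hβ'_def.symm hγ'_def.symm hord hbg'
    rw [← hε_def] at hmin
    rcases le_total (β' * γ') ((β' + γ' - 1) / γ') with hc | hc
    · rw [min_eq_left hc] at hmin; linarith
    · rw [min_eq_right hc] at hmin
      rw [div_le_iff₀ hγ'pos] at hmin
      nlinarith
  · have hβ'pos : 0 < β' := by linarith
    have hmin := bstt_prob w₃ w₂ b a hw₃ hw₂ hs₃ hs₂ hb0 hb1 ha0 ha1 γ' β'
      hγ'_def.symm hβ'_def.symm hord (by linarith)
    have hswap : (∑ q, ∑ p, if 1 < b q + a p then w₃ q * w₂ p else 0) = ε := by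
      rw [hε_def, Finset.sum_comm]
      apply Finset.sum_congr rfl; intro q _
      apply Finset.sum_congr rfl; intro p _
      rw [mul_comm]
      exact if_congr (by constructor <;> intro h <;> linarith) rfl rfl
    rw [hswap] at hmin
    rcases le_total (γ' * β') ((γ' + β' - 1) / β') with hc | hc
    · rw [min_eq_left hc] at hmin; nlinarith
    · rw [min_eq_right hc] at hmin
      rw [div_le_iff₀ hβ'pos] at hmin
      nlinarith
end

section
/- Let events A₁,…,A_n in a probability space be such that each A_i is mutually independent of all but at most Δ of the others, and P(A_i) ≤ 1/(e(Δ+1)) for all i, where e is the base of the natural logarithm. Then P(⋂ᵢ Ā_i) > 0. -/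
/-
Write `N(S) = ⋂_{j ∈ S} Aⱼᶜ` (`noneOf A S`), `x = 1/(Δ+2)` and `z = 1 - x`. By strong induction
on `S`, `μ (Aᵢ ∩ N(S)) ≤ x μ(N(S))` for every `i ∉ S` (the conditional bound
`P(Aᵢ | N(S)) ≤ x` in multiplicative form, so that null events need no care). Split `S` into the
neighbours `S₁` of `i` and the rest `S₂`. Independence gives `μ (Aᵢ ∩ N(S)) ≤ μ(Aᵢ) μ(N(S₂))`,
and removing the at most `Δ` neighbours one at a time, each step controlled by the induction
hypothesis, gives `μ(N(S)) ≥ z^Δ μ(N(S₂))`. As `1/(e(Δ+1)) ≤ x z^Δ`, the claim follows; removing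
all `n` events the same way gives `μ(⋂ᵢ Aᵢᶜ) ≥ z^n > 0`. Taking `x = 1/(Δ+2)` rather than the
usual `1/(Δ+1)` keeps `z > 0` also when `Δ = 0`.
-/

open MeasureTheory ENNReal

lemma one_div_exp_mul_le (d : ℕ) :
    1 / (Real.exp 1 * (d + 1)) ≤ 1 / (d + 2) * ((d + 1 : ℝ) / (d + 2)) ^ d := by
  have hq : ((d + 1 : ℝ) / (d + 2)) = (1 + ((d + 1 : ℕ) : ℝ)⁻¹)⁻¹ := by
    push_cast; field_simp; ring
  have key : (Real.exp 1)⁻¹ ≤ ((d + 1 : ℝ) / (d + 2)) ^ (d + 1) := by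
    rw [hq, inv_pow]
    exact inv_anti₀ (by positivity) Real.one_add_inv_pow_le_exp
  calc 1 / (Real.exp 1 * (d + 1)) = (Real.exp 1)⁻¹ / (d + 1) := by field_simp
    _ ≤ ((d + 1 : ℝ) / (d + 2)) ^ (d + 1) / (d + 1) := by gcongr
    _ = 1 / (d + 2) * ((d + 1 : ℝ) / (d + 2)) ^ d := by rw [pow_succ]; field_simp

namespace LovaszLocalLemma

variable {Ω ι : Type*}

def noneOf (A : ι → Set Ω) (S : Finset ι) : Set Ω := ⋂ j ∈ S, (A j)ᶜ

@[simp]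
lemma noneOf_empty (A : ι → Set Ω) : noneOf A ∅ = Set.univ := by simp [noneOf]

lemma noneOf_insert [DecidableEq ι] (A : ι → Set Ω) (a : ι) (S : Finset ι) :
    noneOf A (insert a S) = noneOf A S \ A a := by
  rw [noneOf, noneOf, Finset.set_biInter_insert, Set.sdiff_eq, Set.inter_comm]

lemma noneOf_anti (A : ι → Set Ω) {S T : Finset ι} (h : S ⊆ T) : noneOf A T ⊆ noneOf A S :=
  Set.biInter_subset_biInter_left h

lemma noneOf_univ [Fintype ι] (A : ι → Set Ω) : noneOf A Finset.univ = ⋂ i, (A i)ᶜ := by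
  simp [noneOf]

variable [DecidableEq ι] [MeasurableSpace Ω] {μ : Measure Ω} [IsFiniteMeasure μ] {A : ι → Set Ω}
  {y z : ℝ≥0∞}

lemma mul_measure_noneOf_le_insert (hyz : z + y ≤ 1) {a : ι} {T : Finset ι}
    (h : μ (A a ∩ noneOf A T) ≤ y * μ (noneOf A T)) :
    z * μ (noneOf A T) ≤ μ (noneOf A (insert a T)) := by
  set N := noneOf A T
  have hy : y * μ N ≠ ∞ :=
    mul_ne_top (ne_top_of_le_ne_top one_ne_top (le_add_self.trans hyz)) (measure_ne_top μ N)
  have hsplit : μ N ≤ μ (A a ∩ N) + μ (N \ A a) := by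
    calc μ N = μ ((A a ∩ N) ∪ (N \ A a)) := by rw [Set.inter_comm, Set.inter_union_sdiff]
      _ ≤ _ := measure_union_le _ _
  rw [noneOf_insert]
  refine ENNReal.le_of_add_le_add_left hy ?_
  calc y * μ N + z * μ N = (z + y) * μ N := by ring
    _ ≤ μ N := by simpa using mul_le_mul_left hyz (μ N)
    _ ≤ y * μ N + μ (N \ A a) := hsplit.trans (add_le_add_left h _)

lemma pow_card_mul_measure_noneOf_le (hyz : z + y ≤ 1) (R U : Finset ι)
    (h : ∀ a ∈ U, ∀ V ⊆ U, a ∉ V →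
      μ (A a ∩ noneOf A (R ∪ V)) ≤ y * μ (noneOf A (R ∪ V))) :
    z ^ U.card * μ (noneOf A R) ≤ μ (noneOf A (R ∪ U)) := by
  induction U using Finset.induction_on with
  | empty => simp
  | insert a U ha ih =>
    have hU := ih fun b hb V hV => h b (Finset.mem_insert_of_mem hb) V
      (hV.trans (Finset.subset_insert a U))
    calc z ^ (insert a U).card * μ (noneOf A R) = z * (z ^ U.card * μ (noneOf A R)) := by
          rw [Finset.card_insert_of_notMem ha, pow_succ]; ring
      _ ≤ z * μ (noneOf A (R ∪ U)) := by gcongr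
      _ ≤ μ (noneOf A (insert a (R ∪ U))) := mul_measure_noneOf_le_insert hyz
          (h a (Finset.mem_insert_self a U) U (Finset.subset_insert a U) ha)
      _ = μ (noneOf A (R ∪ insert a U)) := by rw [Finset.union_insert]

variable [Fintype ι] {G : SimpleGraph ι} [DecidableRel G.Adj] {Δ : ℕ}

theorem measure_inter_noneOf_le (hyz : z + y ≤ 1) (hdeg : ∀ i, G.degree i ≤ Δ)
    (hindep : ∀ i (S : Finset ι), (∀ j ∈ S, j ≠ i ∧ ¬G.Adj i j) →
      μ (A i ∩ noneOf A S) ≤ μ (A i) * μ (noneOf A S))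
    (hp : ∀ i, μ (A i) ≤ y * z ^ Δ) (S : Finset ι) {i : ι} (hi : i ∉ S) :
    μ (A i ∩ noneOf A S) ≤ y * μ (noneOf A S) := by
  induction S using Finset.strongInduction generalizing i with
  | H S ih =>
  set S₁ := S.filter (G.Adj i)
  set S₂ := S.filter (fun j => ¬G.Adj i j)
  have hS : S₂ ∪ S₁ = S := by
    rw [Finset.union_comm]; exact Finset.filter_union_filter_not_eq _ _
  have hS₁ : S₁.card ≤ Δ :=
    (Finset.card_le_card fun j hj =>
      (G.mem_neighborFinset i j).2 (Finset.mem_filter.1 hj).2).trans (hdeg i)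
  have hpeel : z ^ S₁.card * μ (noneOf A S₂) ≤ μ (noneOf A S) := by
    rw [← hS]
    refine pow_card_mul_measure_noneOf_le hyz S₂ S₁ fun a ha V hV haV => ?_
    have ha' : a ∉ S₂ ∪ V := by
      simp only [Finset.mem_union, S₂, Finset.mem_filter, not_or]
      exact ⟨fun h => h.2 (Finset.mem_filter.1 ha).2, haV⟩
    have hsub : S₂ ∪ V ⊂ S := (Finset.ssubset_iff_of_subset
      (hS ▸ Finset.union_subset_union_right hV)).2 ⟨a, hS ▸ Finset.mem_union_right _ ha, ha'⟩
    exact ih _ hsub ha'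
  calc μ (A i ∩ noneOf A S) ≤ μ (A i ∩ noneOf A S₂) :=
        measure_mono (Set.inter_subset_inter_right _ (noneOf_anti A (Finset.filter_subset _ _)))
    _ ≤ μ (A i) * μ (noneOf A S₂) := hindep i S₂ fun j hj =>
        ⟨fun hji => hi (hji ▸ (Finset.mem_filter.1 hj).1), (Finset.mem_filter.1 hj).2⟩
    _ ≤ y * z ^ S₁.card * μ (noneOf A S₂) := by
        gcongr
        refine (hp i).trans ?_
        gcongr y * ?_
        exact pow_le_pow_of_le_one zero_le (le_self_add.trans hyz) hS₁
    _ ≤ y * μ (noneOf A S) := by rw [mul_assoc]; gcongr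

theorem pow_card_mul_measure_univ_le_measure_iInter_compl (hyz : z + y ≤ 1)
    (hdeg : ∀ i, G.degree i ≤ Δ)
    (hindep : ∀ i (S : Finset ι), (∀ j ∈ S, j ≠ i ∧ ¬G.Adj i j) →
      μ (A i ∩ noneOf A S) ≤ μ (A i) * μ (noneOf A S))
    (hp : ∀ i, μ (A i) ≤ y * z ^ Δ) :
    z ^ Fintype.card ι * μ Set.univ ≤ μ (⋂ i, (A i)ᶜ) := by
  simpa [noneOf_univ] using pow_card_mul_measure_noneOf_le (μ := μ) hyz ∅ Finset.univ
    fun a _ V _ haV => measure_inter_noneOf_le hyz hdeg hindep hp _ (by simpa using haV)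

end LovaszLocalLemma

theorem stmt_12_general {Ω : Type*} [MeasurableSpace Ω] (μ : Measure Ω) [IsProbabilityMeasure μ]
    {n : ℕ} (A : Fin n → Set Ω)
    (Δ : ℕ) (G : SimpleGraph (Fin n)) [DecidableRel G.Adj]
    (hdeg : ∀ i, G.degree i ≤ Δ)
    (hindep : ∀ (i : Fin n) (S : Finset (Fin n)), (∀ j ∈ S, j ≠ i ∧ ¬G.Adj i j) →
      ∀ B : Fin n → Set Ω, (∀ j, B j = A j ∨ B j = (A j)ᶜ) →
        μ (A i ∩ ⋂ j ∈ S, B j) = μ (A i) * μ (⋂ j ∈ S, B j))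
    (hp : ∀ i, μ (A i) ≤ ENNReal.ofReal (1 / (Real.exp 1 * (Δ + 1)))) :
    0 < μ (⋂ i, (A i)ᶜ) := by
  set y := ENNReal.ofReal (1 / (Δ + 2))
  set z := ENNReal.ofReal ((Δ + 1) / (Δ + 2))
  have hyz : z + y ≤ 1 := by
    rw [← ENNReal.ofReal_add (by positivity) (by positivity)]
    exact ENNReal.ofReal_le_one.2 (le_of_eq (by field_simp; ring))
  have hpz : ∀ i, μ (A i) ≤ y * z ^ Δ := fun i => (hp i).trans <| by
    rw [← ENNReal.ofReal_pow (by positivity), ← ENNReal.ofReal_mul (by positivity)]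
    exact ENNReal.ofReal_le_ofReal (one_div_exp_mul_le Δ)
  have hz : 0 < z := ENNReal.ofReal_pos.2 (by positivity)
  calc 0 < z ^ Fintype.card (Fin n) * μ Set.univ := by simpa using ENNReal.pow_pos hz n
    _ ≤ μ (⋂ i, (A i)ᶜ) :=
      LovaszLocalLemma.pow_card_mul_measure_univ_le_measure_iInter_compl hyz hdeg
        (fun i S hS => (hindep i S hS _ fun _ => Or.inr rfl).le) hpz

/-- Symmetric Lovász local lemma: if each event `A i` is mutually independent of all other
events except at most `Δ` of them (given by a dependency graph `G` of maximum degree `≤ Δ`),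
and `P(A i) ≤ 1/(e(Δ+1))`, then with positive probability none of the events occurs. -/
theorem stmt_12 {Ω : Type*} [MeasurableSpace Ω] (μ : Measure Ω) [IsProbabilityMeasure μ]
    {n : ℕ} (A : Fin n → Set Ω) (hA : ∀ i, MeasurableSet (A i))
    (Δ : ℕ) (G : SimpleGraph (Fin n)) [DecidableRel G.Adj]
    (hdeg : ∀ i, G.degree i ≤ Δ)
    (hindep : ∀ (i : Fin n) (S : Finset (Fin n)), (∀ j ∈ S, j ≠ i ∧ ¬G.Adj i j) →
      ∀ B : Fin n → Set Ω, (∀ j, B j = A j ∨ B j = (A j)ᶜ) →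
        μ (A i ∩ ⋂ j ∈ S, B j) = μ (A i) * μ (⋂ j ∈ S, B j))
    (hp : ∀ i, μ (A i) ≤ ENNReal.ofReal (1 / (Real.exp 1 * (Δ + 1)))) :
    0 < μ (⋂ i, (A i)ᶜ) :=
  stmt_12_general μ A Δ G hdeg hindep hp
end

section
/- Let T be a tree on n vertices and all edge densities equal to 1 - d with d < 1/λ², where λ is the largest eigenvalue of the adjacency matrix of T. Then for all t ∈ [0,1], the specialized multivariate matching polynomial F_T(d,t) = Σ_k (-1)^k m_k(T) (dt)^k is strictly positive. -/
open Finset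
open scoped Classical

/-!
If the off-diagonal entries of `B` vanish outside the edges of a forest, only permutations moving
each vertex to a neighbour contribute to `det B`. Such a permutation has no orbit of length three
or more (the orbit would close up a cycle), so it is an involution: the partner map of a matching.
For the adjacency matrix `A`, a matching `M` contributes `(-1)^|M| y^(2|M|)` to `det (1 - y A)`,
hence `F_T(d, t) = det (1 - √(dt) A) = ∏ᵢ (1 - √(dt) λᵢ)`, and every factor is positive because
`√(dt) λᵢ ≤ √d λ < 1`.
-/

namespace SimpleGraph

variable {V : Type*} {G : SimpleGraph V}

def IsEdgePerm (G : SimpleGraph V) (σ : Equiv.Perm V) : Prop :=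
  ∀ x, σ x ≠ x → G.Adj x (σ x)

theorem IsAcyclic.involutive_of_isEdgePerm [Finite V] (hG : G.IsAcyclic) {σ : Equiv.Perm V}
    (hσ : G.IsEdgePerm σ) : Function.Involutive σ := by
  intro i
  by_contra hi
  have hmoved : σ i ≠ i := fun h => hi (by rw [h, h])
  -- Following the orbit of `σ i` leads back to `i` without crossing the bridge `s(i, σ i)`.
  set H := G.deleteEdges {s(i, σ i)}
  have hbridge : ¬ H.Reachable (σ i) i := fun h =>
    isAcyclic_iff_forall_adj_isBridge.mp hG (hσ i hmoved) h.symm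
  have hstep : ∀ x, H.Reachable (σ i) x → H.Reachable (σ i) (σ x) := by
    intro x hx
    by_cases hfix : σ x = x
    · rwa [hfix]
    refine hx.trans (Adj.reachable ?_)
    rw [deleteEdges_adj, Set.mem_singleton_iff, Sym2.eq_iff]
    refine ⟨hσ x hfix, ?_⟩
    rintro (⟨rfl, -⟩ | ⟨rfl, h⟩)
    · exact hbridge hx
    · exact hi h
  have horbit : ∀ n : ℕ, H.Reachable (σ i) ((σ ^ (n + 1)) i) := by
    intro n
    induction n with
    | zero => simp
    | succ n ih => rw [pow_succ', Equiv.Perm.mul_apply]; exact hstep _ ih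
  obtain ⟨n, hn⟩ := Nat.exists_eq_succ_of_ne_zero (orderOf_pos σ).ne'
  apply hbridge
  simpa [← Nat.succ_eq_add_one, ← hn, pow_orderOf_eq_one] using horbit n

end SimpleGraph

section MatchPartner

variable {V : Type*} {M : Finset (Sym2 V)} {x y : V}

noncomputable def matchPartner (M : Finset (Sym2 V)) (x : V) : V :=
  if h : ∃ y, s(x, y) ∈ M then h.choose else x

theorem mk_matchPartner_mem (h : ∃ y, s(x, y) ∈ M) : s(x, matchPartner M x) ∈ M := by
  rw [matchPartner, dif_pos h]
  exact h.choose_spec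

theorem matchPartner_eq_self (h : ¬ ∃ y, s(x, y) ∈ M) : matchPartner M x = x := by
  rw [matchPartner, dif_neg h]

theorem mk_matchPartner_mem_of_ne (h : matchPartner M x ≠ x) : s(x, matchPartner M x) ∈ M := by
  by_cases hcov : ∃ y, s(x, y) ∈ M
  · exact mk_matchPartner_mem hcov
  · exact absurd (matchPartner_eq_self hcov) h

variable [DecidableEq V] {G : SimpleGraph V}

theorem IsMatchingSet.matchPartner_eq (hM : IsMatchingSet G M) (h : s(x, y) ∈ M) :
    matchPartner M x = y := by
  by_contra hne
  exact hM.2 _ (mk_matchPartner_mem ⟨y, h⟩) _ h (by rwa [Ne, Sym2.congr_right]) x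
    (Sym2.mem_mk_left _ _) (Sym2.mem_mk_left _ _)

theorem IsMatchingSet.matchPartner_involutive (hM : IsMatchingSet G M) :
    Function.Involutive (matchPartner M) := by
  intro x
  by_cases h : ∃ y, s(x, y) ∈ M
  · exact hM.matchPartner_eq (Sym2.eq_swap ▸ mk_matchPartner_mem h)
  · rw [matchPartner_eq_self h, matchPartner_eq_self h]

noncomputable def IsMatchingSet.toPerm (hM : IsMatchingSet G M) : Equiv.Perm V :=
  hM.matchPartner_involutive.toPerm

theorem IsMatchingSet.toPerm_apply (hM : IsMatchingSet G M) (x : V) :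
    hM.toPerm x = matchPartner M x :=
  rfl

theorem IsMatchingSet.isEdgePerm_toPerm (hM : IsMatchingSet G M) : G.IsEdgePerm hM.toPerm :=
  fun _ hx => hM.1 _ (mk_matchPartner_mem_of_ne hx)

end MatchPartner

namespace Equiv.Perm

variable {V : Type*} {σ : Equiv.Perm V}

theorem mk_eq_mk_apply_of_mem (hσ : Function.Involutive σ) {x v : V} (hv : v ∈ s(x, σ x)) :
    s(x, σ x) = s(v, σ v) := by
  rcases Sym2.mem_iff.mp hv with rfl | rfl
  · rfl
  · rw [hσ, Sym2.eq_swap]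

variable [Fintype V] [DecidableEq V]

def moveEdges (σ : Equiv.Perm V) : Finset (Sym2 V) :=
  σ.support.image fun x => s(x, σ x)

theorem card_support_eq_two_mul_card_moveEdges (hσ : Function.Involutive σ) :
    #σ.support = 2 * #σ.moveEdges := by
  rw [card_eq_sum_card_image (fun x => s(x, σ x)), moveEdges, mul_comm, ← smul_eq_mul,
    ← sum_const]
  refine sum_congr rfl fun e he => ?_
  obtain ⟨x, hx, rfl⟩ := mem_image.mp he
  have hfiber : {a ∈ σ.support | s(a, σ a) = s(x, σ x)} = {x, σ x} := by
    ext a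
    simp only [mem_filter, mem_insert, mem_singleton, mem_support]
    constructor
    · rintro ⟨-, h⟩
      exact Sym2.mem_iff.mp (h ▸ Sym2.mem_mk_left a (σ a))
    · rintro (rfl | rfl)
      · exact ⟨mem_support.mp hx, rfl⟩
      · exact ⟨by rw [hσ]; exact Ne.symm (mem_support.mp hx), by rw [hσ, Sym2.eq_swap]⟩
  rw [hfiber, card_pair (Ne.symm (mem_support.mp hx))]

end Equiv.Perm

namespace SimpleGraph

variable {V : Type*} [Fintype V] [DecidableEq V] {G : SimpleGraph V} {σ : Equiv.Perm V}

theorem IsEdgePerm.isMatchingSet_moveEdges (hσ : G.IsEdgePerm σ) (hinv : Function.Involutive σ) :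
    IsMatchingSet G σ.moveEdges := by
  constructor
  · intro e he
    obtain ⟨x, hx, rfl⟩ := mem_image.mp he
    exact hσ x (Equiv.Perm.mem_support.mp hx)
  · intro e he f hf hef v hve hvf
    obtain ⟨x, -, rfl⟩ := mem_image.mp he
    obtain ⟨z, -, rfl⟩ := mem_image.mp hf
    exact hef ((Equiv.Perm.mk_eq_mk_apply_of_mem hinv hve).trans
      (Equiv.Perm.mk_eq_mk_apply_of_mem hinv hvf).symm)

theorem IsEdgePerm.toPerm_isMatchingSet_moveEdges (hσ : G.IsEdgePerm σ)
    (hinv : Function.Involutive σ) : (hσ.isMatchingSet_moveEdges hinv).toPerm = σ := by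
  have hM := hσ.isMatchingSet_moveEdges hinv
  ext x
  rw [IsMatchingSet.toPerm_apply]
  by_cases hx : σ x = x
  · rw [hx]
    refine matchPartner_eq_self fun ⟨y, hy⟩ => ?_
    obtain ⟨z, -, hzy⟩ := mem_image.mp hy
    have hloop : s(x, y) = s(x, x) := by
      rw [← hzy, Equiv.Perm.mk_eq_mk_apply_of_mem hinv (hzy ▸ Sym2.mem_mk_left x y), hx]
    exact G.irrefl (hloop ▸ hM.1 _ hy : s(x, x) ∈ G.edgeSet)
  · exact hM.matchPartner_eq (mem_image_of_mem _ (Equiv.Perm.mem_support.mpr hx))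

end SimpleGraph

theorem IsMatchingSet.moveEdges_toPerm {V : Type*} [Fintype V] [DecidableEq V]
    {G : SimpleGraph V} {M : Finset (Sym2 V)} (hM : IsMatchingSet G M) :
    hM.toPerm.moveEdges = M := by
  ext e
  induction e using Sym2.ind with | _ a b => ?_
  simp only [Equiv.Perm.moveEdges, mem_image, Equiv.Perm.mem_support, hM.toPerm_apply]
  constructor
  · rintro ⟨x, hx, hxe⟩
    exact hxe ▸ mk_matchPartner_mem_of_ne hx
  · intro he
    have hab : matchPartner M a = b := hM.matchPartner_eq he
    exact ⟨a, hab ▸ (G.ne_of_adj (hM.1 _ he)).symm, hab ▸ rfl⟩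

namespace SimpleGraph

open Matrix Equiv

variable {V R : Type*} [Fintype V] [DecidableEq V] [CommRing R] {G : SimpleGraph V}

theorem det_eq_sum_isEdgePerm {B : Matrix V V R} (hB : ∀ i j, i ≠ j → ¬ G.Adj i j → B i j = 0) :
    B.det = ∑ σ ∈ univ.filter G.IsEdgePerm, (Perm.sign σ : R) * ∏ i, B (σ i) i := by
  rw [det_apply', sum_filter_of_ne]
  intro σ _ hterm x hx
  by_contra hadj
  have hzero : B (σ x) x = 0 := hB _ _ hx fun h => hadj h.symm
  exact hterm (by rw [prod_eq_zero (f := fun i => B (σ i) i) (mem_univ x) hzero, mul_zero])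

variable [DecidableRel G.Adj]

theorem sign_mul_prod_one_sub_smul_adjMatrix {σ : Perm V} (hσ : G.IsEdgePerm σ)
    (hinv : Function.Involutive σ) (y : R) :
    (Perm.sign σ : R) * ∏ i, (1 - y • G.adjMatrix R) (σ i) i
      = (-1) ^ #σ.moveEdges * (y ^ 2) ^ #σ.moveEdges := by
  have hentry : ∀ i, (1 - y • G.adjMatrix R) (σ i) i = if i ∈ σ.support then -y else 1 := by
    intro i
    split_ifs with hi
    · have hne := Perm.mem_support.mp hi
      simp [one_apply_ne hne, (hσ i hne).symm]
    · simp [Perm.notMem_support.mp hi]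
  have hsq : σ ^ 2 = 1 := by
    ext i; simp [sq, hinv i]
  have hsign : Perm.sign σ = (-1) ^ #σ.moveEdges := by
    rw [Perm.sign_of_pow_two_eq_one hsq, Perm.card_fixedPoints, Perm.sum_cycleType,
      Nat.sub_sub_self (card_le_univ _), Perm.card_support_eq_two_mul_card_moveEdges hinv,
      Nat.mul_div_cancel_left _ two_pos]
  simp only [hentry, prod_ite_mem, univ_inter, prod_const, hsign,
    Perm.card_support_eq_two_mul_card_moveEdges hinv, pow_mul]
  push_cast
  ring

theorem IsAcyclic.det_one_sub_smul_adjMatrix (hG : G.IsAcyclic) (y : R) :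
    (1 - y • G.adjMatrix R).det = ∑ M ∈ matchings G, (-1) ^ #M * (y ^ 2) ^ #M := by
  rw [det_eq_sum_isEdgePerm (G := G) fun i j hij hadj => by simp [one_apply_ne hij, hadj]]
  refine sum_bij' (fun σ _ => σ.moveEdges)
    (fun M hM => (mem_filter.mp hM).2.toPerm) ?_ ?_ ?_ ?_ ?_
  · intro σ hσ
    have hσ := (mem_filter.mp hσ).2
    exact mem_filter.mpr ⟨mem_univ _, hσ.isMatchingSet_moveEdges (hG.involutive_of_isEdgePerm hσ)⟩
  · intro M hM
    exact mem_filter.mpr ⟨mem_univ _, (mem_filter.mp hM).2.isEdgePerm_toPerm⟩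
  · intro σ hσ
    have hσ := (mem_filter.mp hσ).2
    exact hσ.toPerm_isMatchingSet_moveEdges (hG.involutive_of_isEdgePerm hσ)
  · intro M hM
    exact (mem_filter.mp hM).2.moveEdges_toPerm
  · intro σ hσ
    have hσ := (mem_filter.mp hσ).2
    exact sign_mul_prod_one_sub_smul_adjMatrix hσ (hG.involutive_of_isEdgePerm hσ) y

end SimpleGraph

open Matrix in
theorem Matrix.IsHermitian.det_one_sub_smul {𝕜 n : Type*} [RCLike 𝕜] [Fintype n] [DecidableEq n]
    {A : Matrix n n 𝕜} (hA : A.IsHermitian) (y : 𝕜) :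
    det (1 - y • A) = ∏ i, (1 - y * hA.eigenvalues i) := by
  set U := hA.eigenvectorUnitary
  have hconj : 1 - y • A =
      Unitary.conjStarAlgAut 𝕜 _ U (diagonal fun i => 1 - y * hA.eigenvalues i) := by
    conv_lhs => rw [hA.spectral_theorem]
    rw [← map_one (Unitary.conjStarAlgAut 𝕜 _ U), ← map_smul, ← map_sub, ← diagonal_one,
      ← diagonal_smul, ← diagonal_sub]
    rfl
  rw [hconj, Unitary.conjStarAlgAut_apply, det_mul, det_mul, mul_right_comm, ← det_mul,
    Unitary.mul_star_self_of_mem U.2, det_one, one_mul, det_diagonal]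

open Matrix in
theorem Matrix.IsHermitian.exists_mulVec_eq_smul {n : Type*} [Fintype n] [DecidableEq n]
    {A : Matrix n n ℝ} (hA : A.IsHermitian) (i : n) :
    ∃ v : n → ℝ, v ≠ 0 ∧ A *ᵥ v = hA.eigenvalues i • v :=
  ⟨_, fun h => hA.eigenvectorBasis.orthonormal.ne_zero i (by simpa using h),
    hA.mulVec_eigenvectorBasis i⟩

theorem Real.sqrt_mul_lt_one {x c : ℝ} (hx : 0 ≤ x) (h : x < 1 / c ^ 2) : √x * c < 1 := by
  rcases le_or_gt c 0 with hc | hc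
  · nlinarith [Real.sqrt_nonneg x]
  · rw [← Real.sqrt_sq hc.le, ← Real.sqrt_mul hx, Real.sqrt_lt' one_pos, one_pow]
    exact (lt_div_iff₀ (by positivity)).mp h

theorem stmt_16_general {V : Type*} [Fintype V] [DecidableEq V] (T : SimpleGraph V)
    [DecidableRel T.Adj] (hT : T.IsTree) (lam : ℝ)
    (hlam : IsGreatest
      {μ : ℝ | ∃ y : V → ℝ, y ≠ 0 ∧ (T.adjMatrix ℝ).mulVec y = μ • y} lam)
    (d : ℝ) (hd0 : 0 ≤ d) (hd : d < 1 / lam ^ 2) :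
    ∀ t : ℝ, 0 ≤ t → t ≤ 1 →
      0 < ∑ M ∈ matchings T, (-1 : ℝ) ^ M.card * (d * t) ^ M.card := by
  intro t ht0 ht1
  have hdt : 0 ≤ d * t := mul_nonneg hd0 ht0
  have hA := T.isHermitian_adjMatrix ℝ
  rw [← Real.sq_sqrt hdt, ← hT.isAcyclic.det_one_sub_smul_adjMatrix, hA.det_one_sub_smul]
  refine prod_pos fun i _ => sub_pos.mpr ?_
  calc √(d * t) * hA.eigenvalues i
      ≤ √(d * t) * lam := by gcongr; exact hlam.2 (hA.exists_mulVec_eq_smul i)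
    _ < 1 := Real.sqrt_mul_lt_one hdt ((mul_le_of_le_one_right hd0 ht1).trans_lt hd)

/-- Let `T` be a tree with spectral radius `λ` (the largest eigenvalue of its adjacency
matrix). If `0 ≤ d ≤ 1` and `d < 1/λ²`, then for all `t ∈ [0,1]` the specialized
multivariate matching polynomial `F_T(d,t) = Σ_k (-1)^k m_k(T) (dt)^k` is strictly
positive. -/
theorem stmt_16 {V : Type*} [Fintype V] [DecidableEq V] (T : SimpleGraph V)
    [DecidableRel T.Adj] (hT : T.IsTree) (lam : ℝ)
    (hlam : IsGreatest
      {μ : ℝ | ∃ y : V → ℝ, y ≠ 0 ∧ (T.adjMatrix ℝ).mulVec y = μ • y} lam)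
    (d : ℝ) (hd0 : 0 ≤ d) (hd1 : d ≤ 1) (hd : d < 1 / lam ^ 2) :
    ∀ t : ℝ, 0 ≤ t → t ≤ 1 →
      0 < ∑ M ∈ matchings T, (-1 : ℝ) ^ M.card * (d * t) ^ M.card :=
  stmt_16_general T hT lam hlam d hd0 hd
end
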